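/- arXiv:1703.06510 — 4 statements merged into one kernel-verified Lean document; each statement's English description precedes it below -/
import Mathlib

section
/- For every n ∈ ℤ, the series ∑_{p ∈ ℤ³} n² / ((n² + ‖p‖² + 1)(‖p‖² + 1)) converges, and there is a constant K > 0 (independent of n) such that ∑_{p ∈ ℤ³} n² / ((n² + ‖p‖² + 1)(‖p‖² + 1)) ≤ K · √(n² ) for all n ∈ ℤ. -/
set_option maxHeartbeats 1000000

/-- Squared Euclidean norm on `ℤ³`. -/
def normSq3 (p : ℤ × ℤ × ℤ) : ℤ := p.1 ^ 2 + p.2.1 ^ 2 + p.2.2 ^ 2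

/-- The summand `n² / ((n² + ‖p‖² + 1)(‖p‖² + 1))`. -/
noncomputable def a1Summand (n : ℤ) (p : ℤ × ℤ × ℤ) : ℝ :=
  (n : ℝ) ^ 2 / (((n : ℝ) ^ 2 + (normSq3 p : ℝ) + 1) * ((normSq3 p : ℝ) + 1))

/-- Helper: an even nonneg function on ℤ with bounded positive partial sums is summable
with explicit tsum bound. -/
lemma tsum_int_even_bound {f : ℤ → ℝ} (hnn : ∀ k, 0 ≤ f k)
    (heven : ∀ k : ℤ, f (-k) = f k) {C : ℝ}
    (hC : ∀ N : ℕ, ∑ k ∈ Finset.range N, f ((k : ℤ) + 1) ≤ C) :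
    Summable f ∧ ∑' k : ℤ, f k ≤ f 0 + 2 * C := by
  have hs1 : Summable (fun k : ℕ => f ((k : ℤ) + 1)) :=
    summable_of_sum_range_le (fun k => hnn _) hC
  have hs0 : Summable (fun k : ℕ => f (k : ℤ)) := by
    have := (summable_nat_add_iff (f := fun k : ℕ => f (k : ℤ)) 1).2
    exact (summable_nat_add_iff 1).1 (by simpa [Nat.cast_add] using hs1)
  have hsneg : Summable (fun k : ℕ => f (-(k : ℤ))) := by simpa [heven] using hs0
  have hsum : Summable f := Summable.of_nat_of_neg hs0 hsneg
  refine ⟨hsum, ?_⟩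
  have htsum := Summable.tsum_of_nat_of_neg hs0 hsneg
  have h1 : ∑' k : ℕ, f ((k : ℤ) + 1) ≤ C :=
    Summable.tsum_le_of_sum_range_le hs1 hC
  have h0 : ∑' k : ℕ, f (k : ℤ) = f 0 + ∑' k : ℕ, f ((k : ℤ) + 1) := by
    rw [Summable.tsum_eq_zero_add hs0]
    simp [Nat.cast_add]
  have hneg : (∑' k : ℕ, f (-(k : ℤ))) = ∑' k : ℕ, f (k : ℤ) := by simp [heven]
  rw [htsum, hneg, h0]
  have := hnn 0
  linarith

lemma zsum_one (c : ℝ) (hc : 1 ≤ c) :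
    Summable (fun k : ℤ => 1 / ((k : ℝ) ^ 2 + c)) ∧
    ∑' k : ℤ, 1 / ((k : ℝ) ^ 2 + c) ≤ 17 / Real.sqrt c := by
  set r := Real.sqrt c with hr
  have hr1 : 1 ≤ r := by
    rw [hr, show (1:ℝ) = Real.sqrt 1 by simp]
    exact Real.sqrt_le_sqrt hc
  have hr2 : r ^ 2 = c := Real.sq_sqrt (by linarith)
  have hnn : ∀ k : ℤ, 0 ≤ 1 / ((k : ℝ) ^ 2 + c) := fun k => by positivity
  have heven : ∀ k : ℤ, 1 / (((-k : ℤ) : ℝ) ^ 2 + c) = 1 / ((k : ℝ) ^ 2 + c) := by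
    intro k; push_cast; ring_nf
  have hC : ∀ N : ℕ, ∑ k ∈ Finset.range N, 1 / ((((k : ℤ) + 1 : ℤ) : ℝ) ^ 2 + c) ≤ 8 / r := by
    intro N
    have htel : ∑ k ∈ Finset.range N,
        ((fun k : ℕ => 8 / ((k : ℝ) + 1 + r)) k - (fun k : ℕ => 8 / ((k : ℝ) + 1 + r)) (k + 1))
        = 8 / (1 + r) - 8 / ((N : ℝ) + 1 + r) := by
      rw [Finset.sum_range_sub' (fun k : ℕ => 8 / ((k : ℝ) + 1 + r))]
      norm_num
    have hle : ∀ k ∈ Finset.range N, 1 / ((((k : ℤ) + 1 : ℤ) : ℝ) ^ 2 + c) ≤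
        (fun k : ℕ => 8 / ((k : ℝ) + 1 + r)) k - (fun k : ℕ => 8 / ((k : ℝ) + 1 + r)) (k + 1) := by
      intro k _
      set a : ℝ := (k : ℝ) + 1 with ha
      have ha1 : 1 ≤ a := by
        rw [ha]; have := Nat.cast_nonneg (α := ℝ) k; linarith
      have h1 : (fun k : ℕ => 8 / ((k : ℝ) + 1 + r)) k - (fun k : ℕ => 8 / ((k : ℝ) + 1 + r)) (k + 1)
          = 8 / ((a + r) * (a + 1 + r)) := by
        simp only [ha]
        push_cast
        rw [div_sub_div _ _ (by positivity) (by positivity)]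
        ring_nf
      rw [h1]
      have hcast : ((((k : ℤ) + 1 : ℤ)) : ℝ) = a := by push_cast [ha]; ring
      rw [hcast, div_le_div_iff₀ (by positivity) (by positivity)]
      nlinarith [sq_nonneg (a - r), sq_nonneg a, sq_nonneg r]
    calc ∑ k ∈ Finset.range N, 1 / ((((k : ℤ) + 1 : ℤ) : ℝ) ^ 2 + c)
        ≤ ∑ k ∈ Finset.range N,
          ((fun k : ℕ => 8 / ((k : ℝ) + 1 + r)) k - (fun k : ℕ => 8 / ((k : ℝ) + 1 + r)) (k + 1)) :=
          Finset.sum_le_sum hle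
      _ = 8 / (1 + r) - 8 / ((N : ℝ) + 1 + r) := htel
      _ ≤ 8 / r := by
          have h1 : 8 / (1 + r) ≤ 8 / r :=
            div_le_div_of_nonneg_left (by norm_num) (by linarith) (by linarith)
          have h2 : 0 ≤ 8 / ((N : ℝ) + 1 + r) := by positivity
          linarith
  obtain ⟨hs, hb⟩ := tsum_int_even_bound hnn heven hC
  refine ⟨hs, ?_⟩
  have hrc : r ≤ c := by nlinarith
  have h0 : 1 / (((0 : ℤ) : ℝ) ^ 2 + c) = 1 / c := by norm_num
  have hinv : 1 / c ≤ 1 / r := by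
    apply div_le_div_of_nonneg_left (by norm_num) (by linarith) hrc
  calc ∑' k : ℤ, 1 / ((k : ℝ) ^ 2 + c) ≤ 1 / (((0 : ℤ) : ℝ) ^ 2 + c) + 2 * (8 / r) := hb
    _ = 1 / c + 16 / r := by rw [h0]; ring
    _ ≤ 1 / r + 16 / r := by linarith
    _ = 17 / r := by ring

lemma zsum_threehalf (c : ℝ) (hc : 1 ≤ c) :
    Summable (fun k : ℤ => 1 / (((k : ℝ) ^ 2 + c) * Real.sqrt ((k : ℝ) ^ 2 + c))) ∧
    ∑' k : ℤ, 1 / (((k : ℝ) ^ 2 + c) * Real.sqrt ((k : ℝ) ^ 2 + c)) ≤ 129 / c := by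
  set r := Real.sqrt c with hr
  have hr1 : 1 ≤ r := by
    rw [hr, show (1:ℝ) = Real.sqrt 1 by simp]
    exact Real.sqrt_le_sqrt hc
  have hr2 : r ^ 2 = c := Real.sq_sqrt (by linarith)
  have hnn : ∀ k : ℤ, 0 ≤ 1 / (((k : ℝ) ^ 2 + c) * Real.sqrt ((k : ℝ) ^ 2 + c)) :=
    fun k => by positivity
  have heven : ∀ k : ℤ, 1 / ((((-k : ℤ) : ℝ) ^ 2 + c) * Real.sqrt ((((-k : ℤ)) : ℝ) ^ 2 + c))
      = 1 / (((k : ℝ) ^ 2 + c) * Real.sqrt ((k : ℝ) ^ 2 + c)) := by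
    intro k; push_cast; ring_nf
  have hC : ∀ N : ℕ, ∑ k ∈ Finset.range N,
      1 / (((((k : ℤ) + 1 : ℤ) : ℝ) ^ 2 + c) * Real.sqrt ((((k : ℤ) + 1 : ℤ) : ℝ) ^ 2 + c))
      ≤ 64 / c := by
    intro N
    set g : ℕ → ℝ := fun k => 64 / ((k : ℝ) + 1 + r) ^ 2 with hg
    have htel : ∑ k ∈ Finset.range N, (g k - g (k + 1)) = g 0 - g N :=
      Finset.sum_range_sub' g N
    have hle : ∀ k ∈ Finset.range N,
        1 / (((((k : ℤ) + 1 : ℤ) : ℝ) ^ 2 + c) * Real.sqrt ((((k : ℤ) + 1 : ℤ) : ℝ) ^ 2 + c))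
        ≤ g k - g (k + 1) := by
      intro k _
      set a : ℝ := (k : ℝ) + 1 with ha
      have ha1 : 1 ≤ a := by rw [ha]; have := Nat.cast_nonneg (α := ℝ) k; linarith
      have hcast : ((((k : ℤ) + 1 : ℤ)) : ℝ) = a := by push_cast [ha]; ring
      rw [hcast]
      set s : ℝ := Real.sqrt (a ^ 2 + c) with hs
      have hs2 : s ^ 2 = a ^ 2 + c := Real.sq_sqrt (by positivity)
      have hs1 : 1 ≤ s := by
        rw [hs, show (1:ℝ) = Real.sqrt 1 by simp]
        exact Real.sqrt_le_sqrt (by nlinarith)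
      have hsar : s ≤ a + r := by
        rw [hs, show a + r = Real.sqrt ((a + r) ^ 2) by
          rw [Real.sqrt_sq (by positivity)]]
        exact Real.sqrt_le_sqrt (by nlinarith)
      have hdiff : g k - g (k + 1) = 64 * (2 * a + 1 + 2 * r) / ((a + r) ^ 2 * (a + 1 + r) ^ 2) := by
        simp only [hg]
        push_cast
        rw [div_sub_div _ _ (by positivity) (by positivity)]
        rw [div_eq_div_iff (by positivity) (by positivity)]
        ring
      rw [hdiff]
      rw [div_le_div_iff₀ (by positivity) (by positivity)]
      have h8 : (a + 1 + r) ^ 2 ≤ 8 * (a ^ 2 + c) := by nlinarith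
      have h8' : (a + r) ^ 2 ≤ 8 * (a ^ 2 + c) := by nlinarith
      have hD : (a + r) ^ 2 * (a + 1 + r) ^ 2 ≤ 64 * (a ^ 2 + c) ^ 2 := by
        calc (a + r) ^ 2 * (a + 1 + r) ^ 2 ≤ (8 * (a ^ 2 + c)) * (8 * (a ^ 2 + c)) :=
              mul_le_mul h8' h8 (by positivity) (by positivity)
          _ = 64 * (a ^ 2 + c) ^ 2 := by ring
      have hss : s ^ 2 ≤ s * (2 * a + 1 + 2 * r) := by
        have h := mul_le_mul_of_nonneg_left (show s ≤ 2 * a + 1 + 2 * r by linarith)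
          (show (0:ℝ) ≤ s by linarith)
        rw [pow_two]; exact h
      calc (1 : ℝ) * ((a + r) ^ 2 * (a + 1 + r) ^ 2) ≤ 64 * (a ^ 2 + c) ^ 2 := by linarith
        _ = 64 * (a ^ 2 + c) * s ^ 2 := by rw [hs2]; ring
        _ ≤ 64 * (a ^ 2 + c) * (s * (2 * a + 1 + 2 * r)) := by
            apply mul_le_mul_of_nonneg_left hss (by positivity)
        _ = 64 * (2 * a + 1 + 2 * r) * ((a ^ 2 + c) * s) := by ring
    calc ∑ k ∈ Finset.range N,
        1 / (((((k : ℤ) + 1 : ℤ) : ℝ) ^ 2 + c) * Real.sqrt ((((k : ℤ) + 1 : ℤ) : ℝ) ^ 2 + c))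
        ≤ ∑ k ∈ Finset.range N, (g k - g (k + 1)) := Finset.sum_le_sum hle
      _ = g 0 - g N := htel
      _ ≤ g 0 := by
          have : 0 ≤ g N := by simp only [hg]; positivity
          linarith
      _ ≤ 64 / c := by
          simp only [hg]
          rw [← hr2]
          push_cast
          apply div_le_div_of_nonneg_left (by norm_num) (by positivity)
          nlinarith
  obtain ⟨hs, hb⟩ := tsum_int_even_bound hnn heven hC
  refine ⟨hs, ?_⟩
  have h0 : 1 / ((((0 : ℤ) : ℝ) ^ 2 + c) * Real.sqrt (((0 : ℤ) : ℝ) ^ 2 + c)) = 1 / (c * r) := by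
    norm_num [hr]
  have h1 : 1 / (c * r) ≤ 1 / c := by
    apply div_le_div_of_nonneg_left (by norm_num) (by linarith) (by nlinarith)
  calc ∑' k : ℤ, 1 / (((k : ℝ) ^ 2 + c) * Real.sqrt ((k : ℝ) ^ 2 + c))
      ≤ 1 / ((((0 : ℤ) : ℝ) ^ 2 + c) * Real.sqrt (((0 : ℤ) : ℝ) ^ 2 + c)) + 2 * (64 / c) := hb
    _ = 1 / (c * r) + 128 / c := by rw [h0]; ring
    _ ≤ 1 / c + 128 / c := by linarith
    _ = 129 / c := by ring

lemma zsum_two (c : ℝ) (hc : 1 ≤ c) :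
    Summable (fun k : ℤ => 1 / ((k : ℝ) ^ 2 + c) ^ 2) ∧
    ∑' k : ℤ, 1 / ((k : ℝ) ^ 2 + c) ^ 2 ≤ 1025 / (c * Real.sqrt c) := by
  set r := Real.sqrt c with hr
  have hr1 : 1 ≤ r := by
    rw [hr, show (1:ℝ) = Real.sqrt 1 by simp]
    exact Real.sqrt_le_sqrt hc
  have hr2 : r ^ 2 = c := Real.sq_sqrt (by linarith)
  have hnn : ∀ k : ℤ, 0 ≤ 1 / ((k : ℝ) ^ 2 + c) ^ 2 := fun k => by positivity
  have heven : ∀ k : ℤ, 1 / (((-k : ℤ) : ℝ) ^ 2 + c) ^ 2 = 1 / ((k : ℝ) ^ 2 + c) ^ 2 := by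
    intro k; push_cast; ring_nf
  have hC : ∀ N : ℕ, ∑ k ∈ Finset.range N,
      1 / ((((k : ℤ) + 1 : ℤ) : ℝ) ^ 2 + c) ^ 2 ≤ 512 / (c * r) := by
    intro N
    set g : ℕ → ℝ := fun k => 512 / ((k : ℝ) + 1 + r) ^ 3 with hg
    have htel : ∑ k ∈ Finset.range N, (g k - g (k + 1)) = g 0 - g N :=
      Finset.sum_range_sub' g N
    have hle : ∀ k ∈ Finset.range N,
        1 / ((((k : ℤ) + 1 : ℤ) : ℝ) ^ 2 + c) ^ 2 ≤ g k - g (k + 1) := by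
      intro k _
      set a : ℝ := (k : ℝ) + 1 with ha
      have ha1 : 1 ≤ a := by rw [ha]; have := Nat.cast_nonneg (α := ℝ) k; linarith
      have hcast : ((((k : ℤ) + 1 : ℤ)) : ℝ) = a := by push_cast [ha]; ring
      rw [hcast]
      set u : ℝ := a + r with hu
      set v : ℝ := a + 1 + r with hv
      have hu0 : 0 < u := by rw [hu]; linarith
      have hv0 : 0 < v := by rw [hv]; linarith
      have hdiff : g k - g (k + 1)
          = 512 * (3 * u ^ 2 + 3 * u + 1) / (u ^ 3 * v ^ 3) := by
        simp only [hg, hu, hv]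
        push_cast
        rw [div_sub_div _ _ (by positivity) (by positivity)]
        rw [div_eq_div_iff (by positivity) (by positivity)]
        ring
      rw [hdiff]
      rw [div_le_div_iff₀ (by positivity) (by positivity)]
      have h8 : v ^ 2 ≤ 8 * (a ^ 2 + c) := by rw [hv]; nlinarith
      have huv : u * v ≤ 8 * (a ^ 2 + c) := by
        have : u * v ≤ v * v := by nlinarith
        nlinarith
      have hu2 : a ^ 2 + c ≤ u ^ 2 := by rw [hu]; nlinarith
      have hD : u ^ 3 * v ^ 3 ≤ 512 * (a ^ 2 + c) ^ 3 := by
        have h1 : u ^ 3 * v ^ 3 = (u * v) ^ 3 := by ring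
        have h2 : (u * v) ^ 3 ≤ (8 * (a ^ 2 + c)) ^ 3 :=
          pow_le_pow_left₀ (by positivity) huv 3
        rw [h1]
        calc (u * v) ^ 3 ≤ (8 * (a ^ 2 + c)) ^ 3 := h2
          _ = 512 * (a ^ 2 + c) ^ 3 := by ring
      calc (1 : ℝ) * (u ^ 3 * v ^ 3) ≤ 512 * (a ^ 2 + c) ^ 3 := by linarith
        _ = 512 * (a ^ 2 + c) ^ 2 * (a ^ 2 + c) := by ring
        _ ≤ 512 * (a ^ 2 + c) ^ 2 * (3 * u ^ 2 + 3 * u + 1) := by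
            apply mul_le_mul_of_nonneg_left _ (by positivity)
            nlinarith
        _ = 512 * (3 * u ^ 2 + 3 * u + 1) * ((a ^ 2 + c) ^ 2) := by ring
    calc ∑ k ∈ Finset.range N, 1 / ((((k : ℤ) + 1 : ℤ) : ℝ) ^ 2 + c) ^ 2
        ≤ ∑ k ∈ Finset.range N, (g k - g (k + 1)) := Finset.sum_le_sum hle
      _ = g 0 - g N := htel
      _ ≤ g 0 := by
          have : 0 ≤ g N := by simp only [hg]; positivity
          linarith
      _ ≤ 512 / (c * r) := by
          simp only [hg]
          push_cast
          have hcr0 : c * r = r ^ 3 := by rw [← hr2]; ring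
          have hcr : c * r ≤ ((0:ℝ) + 1 + r) ^ 3 := by rw [hcr0]; nlinarith [sq_nonneg r]
          apply div_le_div_of_nonneg_left (by norm_num) (by positivity) hcr
  obtain ⟨hs, hb⟩ := tsum_int_even_bound hnn heven hC
  refine ⟨hs, ?_⟩
  have h0 : 1 / (((0 : ℤ) : ℝ) ^ 2 + c) ^ 2 = 1 / c ^ 2 := by norm_num
  have h1 : 1 / c ^ 2 ≤ 1 / (c * r) := by
    apply div_le_div_of_nonneg_left (by norm_num) (by positivity) (by nlinarith)
  calc ∑' k : ℤ, 1 / ((k : ℝ) ^ 2 + c) ^ 2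
      ≤ 1 / (((0 : ℤ) : ℝ) ^ 2 + c) ^ 2 + 2 * (512 / (c * r)) := hb
    _ = 1 / c ^ 2 + 1024 / (c * r) := by rw [h0]; ring
    _ ≤ 1 / (c * r) + 1024 / (c * r) := by linarith
    _ = 1025 / (c * r) := by ring

lemma three_dim (m : ℝ) (hm : 0 ≤ m) :
    Summable (fun p : ℤ × ℤ × ℤ => 1 / ((normSq3 p : ℝ) + 1 + m) ^ 2) ∧
    ∑' p : ℤ × ℤ × ℤ, 1 / ((normSq3 p : ℝ) + 1 + m) ^ 2 ≤ 2247825 / Real.sqrt (1 + m) := by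
  have hm1 : (1:ℝ) ≤ 1 + m := by linarith
  -- the function in a convenient nested form
  set H : ℤ × ℤ × ℤ → ℝ := fun p =>
    1 / (((p.2.2 : ℝ) ^ 2 + ((p.2.1 : ℝ) ^ 2 + ((p.1 : ℝ) ^ 2 + (1 + m)))) ^ 2) with hH
  have hHeq : (fun p : ℤ × ℤ × ℤ => 1 / ((normSq3 p : ℝ) + 1 + m) ^ 2) = H := by
    funext p
    simp only [hH, normSq3]
    push_cast
    ring_nf
  have hDpos : ∀ a : ℤ, (1:ℝ) ≤ (a : ℝ) ^ 2 + (1 + m) := by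
    intro a; nlinarith [sq_nonneg ((a : ℝ))]
  have hCpos : ∀ a b : ℤ, (1:ℝ) ≤ (b : ℝ) ^ 2 + ((a : ℝ) ^ 2 + (1 + m)) := by
    intro a b; nlinarith [sq_nonneg ((a : ℝ)), sq_nonneg ((b : ℝ))]
  -- step 1 : innermost sums
  have step1 : ∀ a b : ℤ, Summable (fun k : ℤ => H (a, b, k)) ∧
      ∑' k : ℤ, H (a, b, k) ≤ 1025 / (((b : ℝ) ^ 2 + ((a : ℝ) ^ 2 + (1 + m))) *
        Real.sqrt ((b : ℝ) ^ 2 + ((a : ℝ) ^ 2 + (1 + m)))) := by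
    intro a b
    exact zsum_two ((b : ℝ) ^ 2 + ((a : ℝ) ^ 2 + (1 + m))) (hCpos a b)
  -- step 2 : middle sums
  have step2 : ∀ a : ℤ, Summable (fun v : ℤ × ℤ => H (a, v)) ∧
      ∑' v : ℤ × ℤ, H (a, v) ≤ 1025 * 129 / ((a : ℝ) ^ 2 + (1 + m)) := by
    intro a
    set D : ℝ := (a : ℝ) ^ 2 + (1 + m) with hD
    obtain ⟨hs32, hb32⟩ := zsum_threehalf D (hDpos a)
    have hbound : ∀ b : ℤ, ∑' k : ℤ, H (a, b, k) ≤
        1025 * (1 / (((b : ℝ) ^ 2 + D) * Real.sqrt ((b : ℝ) ^ 2 + D))) := by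
      intro b
      have := (step1 a b).2
      rw [div_eq_mul_one_div] at this
      exact this
    have hmidsummable : Summable (fun b : ℤ => ∑' k : ℤ, H (a, b, k)) := by
      apply Summable.of_nonneg_of_le (fun b => tsum_nonneg (fun k => by positivity)) hbound
      exact hs32.mul_left 1025
    have hsum : Summable (fun v : ℤ × ℤ => H (a, v)) := by
      apply (summable_prod_of_nonneg (fun v => by positivity)).2
      exact ⟨fun b => (step1 a b).1, hmidsummable⟩
    refine ⟨hsum, ?_⟩
    rw [Summable.tsum_prod' hsum (fun b => (step1 a b).1)]
    calc ∑' b : ℤ, ∑' k : ℤ, H (a, b, k)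
        ≤ ∑' b : ℤ, 1025 * (1 / (((b : ℝ) ^ 2 + D) * Real.sqrt ((b : ℝ) ^ 2 + D))) :=
          Summable.tsum_le_tsum hbound hmidsummable (hs32.mul_left 1025)
      _ = 1025 * ∑' b : ℤ, 1 / (((b : ℝ) ^ 2 + D) * Real.sqrt ((b : ℝ) ^ 2 + D)) :=
          tsum_mul_left
      _ ≤ 1025 * (129 / D) := by
          apply mul_le_mul_of_nonneg_left hb32 (by norm_num)
      _ = 1025 * 129 / D := by ring
  -- step 3 : outer sum
  obtain ⟨hs1, hb1⟩ := zsum_one (1 + m) hm1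
  have hbound2 : ∀ a : ℤ, ∑' v : ℤ × ℤ, H (a, v) ≤
      (1025 * 129) * (1 / ((a : ℝ) ^ 2 + (1 + m))) := by
    intro a
    have := (step2 a).2
    rw [div_eq_mul_one_div] at this
    exact this
  have houtsummable : Summable (fun a : ℤ => ∑' v : ℤ × ℤ, H (a, v)) := by
    apply Summable.of_nonneg_of_le (fun a => tsum_nonneg (fun v => by positivity)) hbound2
    exact hs1.mul_left (1025 * 129)
  have hsumH : Summable H := by
    apply (summable_prod_of_nonneg (fun p => by positivity)).2
    exact ⟨fun a => (step2 a).1, houtsummable⟩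
  constructor
  · rw [hHeq]; exact hsumH
  rw [hHeq, Summable.tsum_prod' hsumH (fun a => (step2 a).1)]
  calc ∑' a : ℤ, ∑' v : ℤ × ℤ, H (a, v)
      ≤ ∑' a : ℤ, (1025 * 129) * (1 / ((a : ℝ) ^ 2 + (1 + m))) :=
        Summable.tsum_le_tsum hbound2 houtsummable (hs1.mul_left (1025 * 129))
    _ = (1025 * 129) * ∑' a : ℤ, 1 / ((a : ℝ) ^ 2 + (1 + m)) := tsum_mul_left
    _ ≤ (1025 * 129) * (17 / Real.sqrt (1 + m)) := by
        apply mul_le_mul_of_nonneg_left hb1 (by norm_num)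
    _ = 2247825 / Real.sqrt (1 + m) := by ring

lemma normSq3_nonneg_real (p : ℤ × ℤ × ℤ) : (0:ℝ) ≤ (normSq3 p : ℝ) := by
  have : (0:ℤ) ≤ normSq3 p := by unfold normSq3; positivity
  exact_mod_cast this

/-- partial fraction / telescoping identity -/
lemma a1_eq_sum (n : ℤ) (p : ℤ × ℤ × ℤ) :
    a1Summand n p = ∑ j ∈ Finset.range (n.natAbs ^ 2),
      1 / (((normSq3 p : ℝ) + 1 + j) * ((normSq3 p : ℝ) + 1 + j + 1)) := by
  set M := n.natAbs ^ 2 with hMdef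
  set y : ℝ := (normSq3 p : ℝ) with hy
  have hy0 : 0 ≤ y := normSq3_nonneg_real p
  have hM : ((M : ℕ) : ℝ) = (n : ℝ) ^ 2 := by
    have h1 : ((M : ℕ) : ℤ) = n ^ 2 := by rw [hMdef]; push_cast [Int.natAbs_sq]; rw [sq_abs]
    exact_mod_cast congrArg (fun z : ℤ => (z : ℝ)) h1
  have htel := Finset.sum_range_sub' (fun j : ℕ => 1 / (y + 1 + j)) M
  have hterm : ∀ j ∈ Finset.range M,
      1 / ((y + 1 + j) * (y + 1 + j + 1)) =
      (fun j : ℕ => 1 / (y + 1 + j)) j - (fun j : ℕ => 1 / (y + 1 + j)) (j + 1) := by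
    intro j _
    have hj0 : (0:ℝ) ≤ (j : ℝ) := Nat.cast_nonneg j
    push_cast
    rw [div_sub_div _ _ (by positivity) (by positivity)]
    rw [div_eq_div_iff (by positivity) (by positivity)]
    ring
  rw [Finset.sum_congr rfl hterm, htel]
  unfold a1Summand
  rw [← hy, ← hM]
  have hM0 : (0:ℝ) ≤ ((M : ℕ) : ℝ) := Nat.cast_nonneg M
  push_cast
  field_simp
  all_goals try ring
  all_goals exact Or.inl trivial

lemma g_summable_bound (j : ℕ) :
    Summable (fun p : ℤ × ℤ × ℤ =>
      1 / (((normSq3 p : ℝ) + 1 + j) * ((normSq3 p : ℝ) + 1 + j + 1))) ∧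
    ∑' p : ℤ × ℤ × ℤ, 1 / (((normSq3 p : ℝ) + 1 + j) * ((normSq3 p : ℝ) + 1 + j + 1))
      ≤ 2247825 / Real.sqrt (1 + j) := by
  obtain ⟨hs, hb⟩ := three_dim (j : ℝ) (Nat.cast_nonneg j)
  have hle : ∀ p : ℤ × ℤ × ℤ,
      1 / (((normSq3 p : ℝ) + 1 + j) * ((normSq3 p : ℝ) + 1 + j + 1))
      ≤ 1 / ((normSq3 p : ℝ) + 1 + j) ^ 2 := by
    intro p
    have hy := normSq3_nonneg_real p
    have hj : (0:ℝ) ≤ (j : ℝ) := Nat.cast_nonneg j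
    apply one_div_le_one_div_of_le (by positivity)
    nlinarith
  have hnn : ∀ p : ℤ × ℤ × ℤ,
      0 ≤ 1 / (((normSq3 p : ℝ) + 1 + j) * ((normSq3 p : ℝ) + 1 + j + 1)) := by
    intro p
    have hy := normSq3_nonneg_real p
    have hj : (0:ℝ) ≤ (j : ℝ) := Nat.cast_nonneg j
    positivity
  have hsum := hs.of_nonneg_of_le hnn hle
  exact ⟨hsum, le_trans (Summable.tsum_le_tsum hle hsum hs) hb⟩

lemma sum_inv_sqrt_le (M : ℕ) :
    ∑ j ∈ Finset.range M, 1 / Real.sqrt (1 + (j : ℝ)) ≤ 2 * Real.sqrt M := by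
  have htel := Finset.sum_range_sub (fun j : ℕ => 2 * Real.sqrt (j : ℝ)) M
  have hle : ∀ j ∈ Finset.range M, 1 / Real.sqrt (1 + (j : ℝ)) ≤
      (fun j : ℕ => 2 * Real.sqrt (j : ℝ)) (j + 1) - (fun j : ℕ => 2 * Real.sqrt (j : ℝ)) j := by
    intro j _
    set u : ℝ := Real.sqrt (j : ℝ) with hu
    have hj0 : (0:ℝ) ≤ (j : ℝ) := Nat.cast_nonneg j
    have h1j : (1:ℝ) + (j : ℝ) = ((j + 1 : ℕ) : ℝ) := by push_cast; ring
    rw [h1j]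
    set v : ℝ := Real.sqrt ((j + 1 : ℕ) : ℝ) with hv
    have hu2 : u ^ 2 = (j : ℝ) := Real.sq_sqrt hj0
    have hv2 : v ^ 2 = (j : ℝ) + 1 := by
      rw [hv]; rw [Real.sq_sqrt (by push_cast; linarith)]; push_cast; ring
    have hu0 : 0 ≤ u := Real.sqrt_nonneg _
    have hv0 : 0 < v := by nlinarith [Real.sqrt_nonneg (((j + 1 : ℕ)) : ℝ)]
    have huv : u ≤ v := Real.sqrt_le_sqrt (by push_cast; linarith)
    show 1 / v ≤ 2 * v - 2 * u
    rw [div_le_iff₀ hv0]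
    nlinarith [sq_nonneg (u - v)]
  calc ∑ j ∈ Finset.range M, 1 / Real.sqrt (1 + (j : ℝ))
      ≤ ∑ j ∈ Finset.range M,
        ((fun j : ℕ => 2 * Real.sqrt (j : ℝ)) (j + 1) - (fun j : ℕ => 2 * Real.sqrt (j : ℝ)) j) :=
        Finset.sum_le_sum hle
    _ = 2 * Real.sqrt (M : ℝ) - 2 * Real.sqrt ((0 : ℕ) : ℝ) := htel
    _ ≤ 2 * Real.sqrt M := by norm_num

/-- The renormalized tadpole amplitude `a₁(n)` is summable and bounded by `K·|n|`. -/
theorem a1_summable_and_linear_bound :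
    (∀ n : ℤ, Summable fun p : ℤ × ℤ × ℤ => a1Summand n p) ∧
    ∃ K : ℝ, 0 < K ∧ ∀ n : ℤ,
      (∑' p : ℤ × ℤ × ℤ, a1Summand n p) ≤ K * Real.sqrt ((n : ℝ) ^ 2) := by
  have hsummable : ∀ n : ℤ, Summable fun p : ℤ × ℤ × ℤ => a1Summand n p := by
    intro n
    have : (fun p : ℤ × ℤ × ℤ => a1Summand n p) = fun p =>
        ∑ j ∈ Finset.range (n.natAbs ^ 2),
          1 / (((normSq3 p : ℝ) + 1 + j) * ((normSq3 p : ℝ) + 1 + j + 1)) :=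
      funext (a1_eq_sum n)
    rw [this]
    exact summable_sum (fun j _ => (g_summable_bound j).1)
  refine ⟨hsummable, 4495650, by norm_num, ?_⟩
  intro n
  set M := n.natAbs ^ 2 with hMdef
  have hM : ((M : ℕ) : ℝ) = (n : ℝ) ^ 2 := by
    have h1 : ((M : ℕ) : ℤ) = n ^ 2 := by rw [hMdef]; push_cast [Int.natAbs_sq]; rw [sq_abs]
    exact_mod_cast congrArg (fun z : ℤ => (z : ℝ)) h1
  calc ∑' p : ℤ × ℤ × ℤ, a1Summand n p
      = ∑' p : ℤ × ℤ × ℤ, ∑ j ∈ Finset.range M,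
          1 / (((normSq3 p : ℝ) + 1 + j) * ((normSq3 p : ℝ) + 1 + j + 1)) :=
        tsum_congr (a1_eq_sum n)
    _ = ∑ j ∈ Finset.range M, ∑' p : ℤ × ℤ × ℤ,
          1 / (((normSq3 p : ℝ) + 1 + j) * ((normSq3 p : ℝ) + 1 + j + 1)) :=
        Summable.tsum_finsetSum (fun j _ => (g_summable_bound j).1)
    _ ≤ ∑ j ∈ Finset.range M, 2247825 / Real.sqrt (1 + (j : ℝ)) :=
        Finset.sum_le_sum (fun j _ => (g_summable_bound j).2)
    _ = 2247825 * ∑ j ∈ Finset.range M, 1 / Real.sqrt (1 + (j : ℝ)) := by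
        rw [Finset.mul_sum]
        apply Finset.sum_congr rfl
        intro j _
        rw [div_eq_mul_one_div]
    _ ≤ 2247825 * (2 * Real.sqrt M) :=
        mul_le_mul_of_nonneg_left (sum_inv_sqrt_le M) (by norm_num)
    _ = 4495650 * Real.sqrt ((n : ℝ) ^ 2) := by rw [hM]; ring
end

section
/- There exists a constant K > 0 such that for every n ∈ ℤ, ∑_{p ∈ ℤ³} ∑_{q ∈ ℤ³} n² · p₁² · (n² + 2(‖p‖²+1)) / ((n² + ‖p‖² + 1)² (‖p‖²+1)² (p₁² + ‖q‖² + 1)(‖q‖²+1)) ≤ K · log(1 + √(n²)) + K. -/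
/-- The summand
`n² · p₁² · (n² + 2(‖p‖²+1)) / ((n²+‖p‖²+1)² (‖p‖²+1)² (p₁²+‖q‖²+1)(‖q‖²+1))`. -/
noncomputable def a2Summand (n : ℤ) (pq : (ℤ × ℤ × ℤ) × (ℤ × ℤ × ℤ)) : ℝ :=
  let p := pq.1
  let q := pq.2
  (n : ℝ) ^ 2 * (p.1 : ℝ) ^ 2 * ((n : ℝ) ^ 2 + 2 * ((normSq3 p : ℝ) + 1)) /
    (((n : ℝ) ^ 2 + (normSq3 p : ℝ) + 1) ^ 2 * ((normSq3 p : ℝ) + 1) ^ 2 *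
      ((p.1 : ℝ) ^ 2 + (normSq3 q : ℝ) + 1) * ((normSq3 q : ℝ) + 1))

set_option maxHeartbeats 1000000

namespace A2aux

lemma normSq3_cast (p : ℤ × ℤ × ℤ) :
    (normSq3 p : ℝ) = (p.1 : ℝ)^2 + (p.2.1 : ℝ)^2 + (p.2.2 : ℝ)^2 := by
  push_cast [normSq3]; ring

lemma normSq3_nonneg (p : ℤ × ℤ × ℤ) : 0 ≤ (normSq3 p : ℝ) := by
  rw [normSq3_cast]; positivity

noncomputable def box (N : ℕ) : Finset (ℤ × ℤ × ℤ) :=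
  Finset.Icc (-(N:ℤ)) N ×ˢ (Finset.Icc (-(N:ℤ)) N ×ˢ Finset.Icc (-(N:ℤ)) N)

lemma mem_box {N : ℕ} {p : ℤ × ℤ × ℤ} :
    p ∈ box N ↔ |p.1| ≤ (N:ℤ) ∧ |p.2.1| ≤ (N:ℤ) ∧ |p.2.2| ≤ (N:ℤ) := by
  simp [box, Finset.mem_Icc, abs_le]

lemma box_mono {M N : ℕ} (h : M ≤ N) : box M ⊆ box N := by
  intro p hp
  rw [mem_box] at hp ⊢
  have : (M:ℤ) ≤ N := by exact_mod_cast h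
  exact ⟨hp.1.trans this, hp.2.1.trans this, hp.2.2.trans this⟩

lemma card_box (N : ℕ) : (box N).card = (2*N+1)^3 := by
  have h : (Finset.Icc (-(N:ℤ)) N).card = 2*N+1 := by
    rw [Int.card_Icc]; omega
  simp [box, h]; ring

lemma box_zero : box 0 = {((0:ℤ),(0:ℤ),(0:ℤ))} := by
  ext p
  simp [box, Finset.mem_Icc, Prod.ext_iff]

lemma normSq3_ge {r : ℕ} {p : ℤ × ℤ × ℤ} (h : p ∉ box r) :
    ((r:ℝ)+1)^2 ≤ (normSq3 p : ℝ) := by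
  rw [mem_box] at h
  push_neg at h
  rw [normSq3_cast]
  have key : ∀ a : ℤ, (r:ℤ) < |a| → ((r:ℝ)+1)^2 ≤ (a:ℝ)^2 := by
    intro a ha
    have h1 : (r:ℤ)+1 ≤ |a| := ha
    have h2 : ((r:ℝ)+1) ≤ |(a:ℝ)| := by
      have h3 : ((r:ℤ)+1 : ℝ) ≤ ((|a| : ℤ) : ℝ) := by exact_mod_cast h1
      rw [Int.cast_abs] at h3
      push_cast at h3
      exact h3
    calc ((r:ℝ)+1)^2 ≤ |(a:ℝ)|^2 := by
          apply pow_le_pow_left₀ (by positivity) h2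
      _ = (a:ℝ)^2 := sq_abs _
  have s1 : (0:ℝ) ≤ (p.1:ℝ)^2 := by positivity
  have s2 : (0:ℝ) ≤ (p.2.1:ℝ)^2 := by positivity
  have s3 : (0:ℝ) ≤ (p.2.2:ℝ)^2 := by positivity
  rcases lt_or_ge (r:ℤ) |p.1| with h1 | h1
  · nlinarith [key _ h1]
  rcases lt_or_ge (r:ℤ) |p.2.1| with h2 | h2
  · nlinarith [key _ h2]
  · have h3 := h h1 h2
    nlinarith [key _ h3]

lemma exists_box (s : Finset (ℤ × ℤ × ℤ)) : ∃ N, s ⊆ box N := by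
  refine ⟨s.sup (fun p => p.1.natAbs ⊔ (p.2.1.natAbs ⊔ p.2.2.natAbs)), fun p hp => ?_⟩
  set N := s.sup (fun p => p.1.natAbs ⊔ (p.2.1.natAbs ⊔ p.2.2.natAbs)) with hN
  have h := Finset.le_sup (f := fun p : ℤ×ℤ×ℤ => p.1.natAbs ⊔ (p.2.1.natAbs ⊔ p.2.2.natAbs)) hp
  rw [mem_box]
  simp only [sup_le_iff] at h
  refine ⟨?_, ?_, ?_⟩ <;> rw [Int.abs_eq_natAbs] <;> exact_mod_cast by omega
  
lemma card_shell (N : ℕ) : (box (N+1) \ box N).card = 24*(N+1)^2 + 2 := by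
  rw [Finset.card_sdiff_of_subset (box_mono (Nat.le_succ N)), card_box, card_box]
  show (2*(N+1)+1)^3 - (2*N+1)^3 = 24*(N+1)^2+2
  have h1 : (2*(N+1)+1)^3 = (2*N+1)^3 + (24*(N+1)^2+2) := by ring
  omega

lemma sum_box_le (f : ℤ × ℤ × ℤ → ℝ) (g : ℕ → ℝ) (hg : ∀ r, 0 ≤ g r)
    (h0 : f ((0:ℤ),(0:ℤ),(0:ℤ)) ≤ g 0)
    (h : ∀ (r : ℕ) (p : ℤ × ℤ × ℤ), p ∉ box r → f p ≤ g (r+1)) (N : ℕ) :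
    ∑ p ∈ box N, f p ≤ ∑ r ∈ Finset.range (N+1), (24*(r:ℝ)^2+2) * g r := by
  induction N with
  | zero =>
    rw [box_zero]
    simp only [Finset.sum_singleton, zero_add, Finset.range_one, Finset.sum_singleton,
      Nat.cast_zero]
    nlinarith [hg 0, h0]
  | succ N ih =>
    rw [← Finset.sum_sdiff (box_mono (Nat.le_succ N)), Finset.sum_range_succ]
    have hshell : ∑ p ∈ box (N+1) \ box N, f p ≤ (24*(((N+1:ℕ)):ℝ)^2+2) * g (N+1) := by
      calc ∑ p ∈ box (N+1) \ box N, f p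
          ≤ (box (N+1) \ box N).card • g (N+1) := by
            apply Finset.sum_le_card_nsmul
            intro x hx
            exact h N x (Finset.mem_sdiff.mp hx).2
        _ = (24*(((N+1:ℕ)):ℝ)^2+2) * g (N+1) := by
            rw [card_shell, nsmul_eq_mul]
            push_cast
            ring
    rw [add_comm]
    exact add_le_add ih hshell


lemma sum_telescope (b f : ℕ → ℝ) (hb : ∀ r, 1 ≤ r → f r ≤ b r - b (r+1))
    (hbn : ∀ r, 0 ≤ b r) (a K : ℕ) (ha : 1 ≤ a) :
    ∑ r ∈ Finset.Ico a K, f r ≤ b a := by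
  rcases le_or_gt a K with h | h
  · have key : ∀ J, a ≤ J → ∑ r ∈ Finset.Ico a J, f r ≤ b a - b J := by
      intro J hJ
      induction J, hJ using Nat.le_induction with
      | base => simp
      | succ J hJ ih =>
        rw [Finset.sum_Ico_succ_top hJ]
        have := hb J (le_trans ha hJ)
        linarith
    have := key K h
    have := hbn K
    linarith
  · rw [Finset.Ico_eq_empty (by omega)]
    simp [hbn a]

lemma telescope1 (a K : ℕ) (ha : 1 ≤ a) :
    ∑ r ∈ Finset.Ico a K, (1:ℝ)/((r:ℝ)*((r:ℝ)+1)) ≤ 1/(a:ℝ) := by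
  apply sum_telescope (fun r => 1/(r:ℝ)) _ _ _ _ _ ha
  · intro r hr
    have hr' : (1:ℝ) ≤ (r:ℝ) := by exact_mod_cast hr
    rw [div_sub_div _ _ (by positivity) (by positivity)]
    push_cast
    rw [div_le_div_iff₀ (by positivity) (by positivity)]
    nlinarith [sq_nonneg ((r:ℝ))]
  · intro r; positivity

lemma telescope2 (a K : ℕ) (ha : 1 ≤ a) :
    ∑ r ∈ Finset.Ico a K, (1:ℝ)/((r:ℝ)*((r:ℝ)+1)*((r:ℝ)+2)) ≤ 1/(2*(a:ℝ)*((a:ℝ)+1)) := by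
  apply sum_telescope (fun r => 1/(2*(r:ℝ)*((r:ℝ)+1))) _ _ _ _ _ ha
  · intro r hr
    have hr' : (1:ℝ) ≤ (r:ℝ) := by exact_mod_cast hr
    rw [div_sub_div _ _ (by positivity) (by positivity)]
    push_cast
    rw [div_le_div_iff₀ (by positivity) (by positivity)]
    nlinarith [sq_nonneg ((r:ℝ))]
  · intro r; positivity

lemma harmonic_le (K : ℕ) : ∑ r ∈ Finset.range K, (1:ℝ)/((r:ℝ)+1) ≤ 1 + Real.log K := by
  induction K with
  | zero => simp
  | succ K ih =>
    rcases Nat.eq_zero_or_pos K with rfl | hK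
    · norm_num
    have hK' : (1:ℝ) ≤ (K:ℝ) := by exact_mod_cast hK
    rw [Finset.sum_range_succ]
    have hlog : (1:ℝ)/((K:ℝ)+1) ≤ Real.log ((K:ℝ)+1) - Real.log K := by
      have h1 : Real.log ((K:ℝ)/((K:ℝ)+1)) ≤ (K:ℝ)/((K:ℝ)+1) - 1 :=
        Real.log_le_sub_one_of_pos (by positivity)
      rw [Real.log_div (by positivity) (by positivity)] at h1
      have h2 : (K:ℝ)/((K:ℝ)+1) - 1 = -(1/((K:ℝ)+1)) := by
        field_simp
        ring
      rw [h2] at h1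
      linarith
    push_cast
    linarith

-- L1
lemma L1 (m : ℤ) (N : ℕ) :
    ∑ r ∈ Finset.range (N+1), (1:ℝ)/((m:ℝ)^2 + (r:ℝ)^2 + 1)
      ≤ 4 / Real.sqrt ((m:ℝ)^2+1) := by
  set S := Real.sqrt ((m:ℝ)^2+1) with hS
  have hS0 : 0 < S := Real.sqrt_pos.mpr (by positivity)
  have hSsq : S^2 = (m:ℝ)^2+1 := Real.sq_sqrt (by positivity)
  set m₀ := m.natAbs with hm₀
  have hcast : ((m₀:ℝ))^2 = (m:ℝ)^2 := by
    rw [hm₀, Nat.cast_natAbs]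
    push_cast
    rw [sq_abs]
  have hSle : S ≤ (m₀:ℝ)+1 := by
    nlinarith [Real.sq_sqrt (show (0:ℝ) ≤ (m:ℝ)^2+1 by positivity), hS0.le]
  have hle2S : (m₀:ℝ)+1 ≤ 2*S := by
    nlinarith [hS0.le, hSsq, hcast, sq_nonneg ((m₀:ℝ)-1)]
  set K := max (N+1) (m₀+1) with hK
  have hsub : Finset.range (N+1) ⊆ Finset.range K := Finset.range_subset_range.mpr (le_max_left _ _)
  have step1 : ∑ r ∈ Finset.range (N+1), (1:ℝ)/((m:ℝ)^2 + (r:ℝ)^2 + 1)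
      ≤ ∑ r ∈ Finset.range K, (1:ℝ)/((m:ℝ)^2 + (r:ℝ)^2 + 1) := by
    apply Finset.sum_le_sum_of_subset_of_nonneg hsub
    intro i _ _; positivity
  have hsplit : ∑ r ∈ Finset.Ico 0 (m₀+1), (1:ℝ)/((m:ℝ)^2 + (r:ℝ)^2 + 1)
      + ∑ r ∈ Finset.Ico (m₀+1) K, (1:ℝ)/((m:ℝ)^2 + (r:ℝ)^2 + 1)
      = ∑ r ∈ Finset.range K, (1:ℝ)/((m:ℝ)^2 + (r:ℝ)^2 + 1) := by
    rw [Finset.range_eq_Ico]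
    exact Finset.sum_Ico_consecutive _ (by omega) (le_max_right _ _)
  have hhead : ∑ r ∈ Finset.Ico 0 (m₀+1), (1:ℝ)/((m:ℝ)^2 + (r:ℝ)^2 + 1) ≤ 2/S := by
    calc ∑ r ∈ Finset.Ico 0 (m₀+1), (1:ℝ)/((m:ℝ)^2 + (r:ℝ)^2 + 1)
        ≤ (Finset.Ico 0 (m₀+1)).card • ((1:ℝ)/((m:ℝ)^2+1)) := by
          apply Finset.sum_le_card_nsmul
          intro r _
          apply div_le_div_of_nonneg_left (by norm_num) (by positivity)
          nlinarith [sq_nonneg ((r:ℝ))]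
      _ = ((m₀:ℝ)+1) * (1/((m:ℝ)^2+1)) := by
          rw [Nat.card_Ico, nsmul_eq_mul]; push_cast; ring
      _ ≤ (2*S) * (1/((m:ℝ)^2+1)) := by
          apply mul_le_mul_of_nonneg_right hle2S (by positivity)
      _ = 2/S := by
          rw [← hSsq]
          field_simp
  have htail : ∑ r ∈ Finset.Ico (m₀+1) K, (1:ℝ)/((m:ℝ)^2 + (r:ℝ)^2 + 1) ≤ 2/S := by
    calc ∑ r ∈ Finset.Ico (m₀+1) K, (1:ℝ)/((m:ℝ)^2 + (r:ℝ)^2 + 1)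
        ≤ ∑ r ∈ Finset.Ico (m₀+1) K, 2*((1:ℝ)/((r:ℝ)*((r:ℝ)+1))) := by
          apply Finset.sum_le_sum
          intro r hr
          have hr1 : (m₀+1) ≤ r := (Finset.mem_Ico.mp hr).1
          have hr' : (1:ℝ) ≤ (r:ℝ) := by
            have : 1 ≤ r := by omega
            exact_mod_cast this
          rw [mul_one_div, div_le_div_iff₀ (by positivity) (by positivity)]
          nlinarith [sq_nonneg ((m:ℝ))]
      _ = 2 * ∑ r ∈ Finset.Ico (m₀+1) K, (1:ℝ)/((r:ℝ)*((r:ℝ)+1)) := by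
          rw [Finset.mul_sum]
      _ ≤ 2 * (1/((m₀:ℝ)+1)) := by
          have := telescope1 (m₀+1) K (by omega)
          push_cast at this
          linarith
      _ ≤ 2/S := by
          rw [mul_one_div]
          apply div_le_div_of_nonneg_left (by norm_num) hS0
          exact hSle
  calc ∑ r ∈ Finset.range (N+1), (1:ℝ)/((m:ℝ)^2 + (r:ℝ)^2 + 1)
      ≤ ∑ r ∈ Finset.range K, (1:ℝ)/((m:ℝ)^2 + (r:ℝ)^2 + 1) := step1
    _ = _ + _ := hsplit.symm
    _ ≤ 2/S + 2/S := add_le_add hhead htail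
    _ = 4/S := by ring

-- L2
lemma L2 (n : ℤ) (N : ℕ) :
    ∑ r ∈ Finset.range (N+1), (n:ℝ)^2/(((n:ℝ)^2 + (r:ℝ)^2 + 1)*((r:ℝ)+1))
      ≤ 5/2 * (1 + Real.log (1 + |(n:ℝ)|)) := by
  set n₀ := n.natAbs with hn₀
  have hcast : ((n₀:ℝ)) = |(n:ℝ)| := by
    rw [hn₀, Nat.cast_natAbs]; push_cast; ring
  have hcast2 : ((n₀:ℝ))^2 = (n:ℝ)^2 := by rw [hcast, sq_abs]
  set K := max (N+1) (n₀+1) with hK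
  have hsub : Finset.range (N+1) ⊆ Finset.range K := Finset.range_subset_range.mpr (le_max_left _ _)
  have hnn : ∀ r : ℕ, (0:ℝ) ≤ (n:ℝ)^2/(((n:ℝ)^2 + (r:ℝ)^2 + 1)*((r:ℝ)+1)) := by
    intro r; positivity
  have step1 : ∑ r ∈ Finset.range (N+1), (n:ℝ)^2/(((n:ℝ)^2 + (r:ℝ)^2 + 1)*((r:ℝ)+1))
      ≤ ∑ r ∈ Finset.range K, (n:ℝ)^2/(((n:ℝ)^2 + (r:ℝ)^2 + 1)*((r:ℝ)+1)) := by
    apply Finset.sum_le_sum_of_subset_of_nonneg hsub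
    intro i _ _; exact hnn i
  have hsplit : ∑ r ∈ Finset.Ico 0 (n₀+1), (n:ℝ)^2/(((n:ℝ)^2 + (r:ℝ)^2 + 1)*((r:ℝ)+1))
      + ∑ r ∈ Finset.Ico (n₀+1) K, (n:ℝ)^2/(((n:ℝ)^2 + (r:ℝ)^2 + 1)*((r:ℝ)+1))
      = ∑ r ∈ Finset.range K, (n:ℝ)^2/(((n:ℝ)^2 + (r:ℝ)^2 + 1)*((r:ℝ)+1)) := by
    rw [Finset.range_eq_Ico]
    exact Finset.sum_Ico_consecutive _ (by omega) (le_max_right _ _)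
  have hhead : ∑ r ∈ Finset.Ico 0 (n₀+1), (n:ℝ)^2/(((n:ℝ)^2 + (r:ℝ)^2 + 1)*((r:ℝ)+1))
      ≤ 1 + Real.log (1 + |(n:ℝ)|) := by
    calc ∑ r ∈ Finset.Ico 0 (n₀+1), (n:ℝ)^2/(((n:ℝ)^2 + (r:ℝ)^2 + 1)*((r:ℝ)+1))
        ≤ ∑ r ∈ Finset.Ico 0 (n₀+1), (1:ℝ)/((r:ℝ)+1) := by
          apply Finset.sum_le_sum
          intro r _
          rw [div_le_div_iff₀ (by positivity) (by positivity)]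
          nlinarith [sq_nonneg ((r:ℝ)), sq_nonneg ((n:ℝ))]
      _ = ∑ r ∈ Finset.range (n₀+1), (1:ℝ)/((r:ℝ)+1) := by rw [Finset.range_eq_Ico]
      _ ≤ 1 + Real.log ((n₀:ℕ)+1 : ℕ) := by
          have := harmonic_le (n₀+1)
          push_cast at this ⊢
          linarith
      _ = 1 + Real.log (1 + |(n:ℝ)|) := by
          push_cast
          rw [hcast]
          ring_nf
  have htail : ∑ r ∈ Finset.Ico (n₀+1) K, (n:ℝ)^2/(((n:ℝ)^2 + (r:ℝ)^2 + 1)*((r:ℝ)+1))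
      ≤ 3/2 := by
    calc ∑ r ∈ Finset.Ico (n₀+1) K, (n:ℝ)^2/(((n:ℝ)^2 + (r:ℝ)^2 + 1)*((r:ℝ)+1))
        ≤ ∑ r ∈ Finset.Ico (n₀+1) K, (3*(n:ℝ)^2)*((1:ℝ)/((r:ℝ)*((r:ℝ)+1)*((r:ℝ)+2))) := by
          apply Finset.sum_le_sum
          intro r hr
          have hr1 : (n₀+1) ≤ r := (Finset.mem_Ico.mp hr).1
          have hr' : (1:ℝ) ≤ (r:ℝ) := by
            have : 1 ≤ r := by omega
            exact_mod_cast this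
          rw [mul_one_div, div_le_div_iff₀ (by positivity) (by positivity)]
          have hkey : (0:ℝ) ≤ (n:ℝ)^2*(((r:ℝ)+1)*(3*(n:ℝ)^2+2*(r:ℝ)^2-2*(r:ℝ)+3)) := by
            apply mul_nonneg (sq_nonneg _)
            apply mul_nonneg (by positivity)
            nlinarith [sq_nonneg ((r:ℝ)-1), sq_nonneg ((n:ℝ))]
          nlinarith [hkey]
      _ = (3*(n:ℝ)^2) * ∑ r ∈ Finset.Ico (n₀+1) K, (1:ℝ)/((r:ℝ)*((r:ℝ)+1)*((r:ℝ)+2)) := by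
          rw [Finset.mul_sum]
      _ ≤ (3*(n:ℝ)^2) * (1/(2*((n₀:ℝ)+1)*(((n₀:ℝ)+1)+1))) := by
          have ht := telescope2 (n₀+1) K (by omega)
          push_cast at ht
          have h3 : (0:ℝ) ≤ 3*(n:ℝ)^2 := by positivity
          apply mul_le_mul_of_nonneg_left _ h3
          exact ht
      _ ≤ 3/2 := by
          have hpos : (0:ℝ) < 2*((n₀:ℝ)+1)*(((n₀:ℝ)+1)+1) := by positivity
          rw [mul_one_div, div_le_div_iff₀ hpos (by norm_num : (0:ℝ) < 2)]
          nlinarith [hcast2, sq_nonneg ((n₀:ℝ))]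
  have hlog : 0 ≤ Real.log (1 + |(n:ℝ)|) := Real.log_nonneg (by nlinarith [abs_nonneg ((n:ℝ))])
  calc ∑ r ∈ Finset.range (N+1), (n:ℝ)^2/(((n:ℝ)^2 + (r:ℝ)^2 + 1)*((r:ℝ)+1))
      ≤ ∑ r ∈ Finset.range K, (n:ℝ)^2/(((n:ℝ)^2 + (r:ℝ)^2 + 1)*((r:ℝ)+1)) := step1
    _ = _ + _ := hsplit.symm
    _ ≤ (1 + Real.log (1 + |(n:ℝ)|)) + 3/2 := add_le_add hhead htail
    _ ≤ 5/2 * (1 + Real.log (1 + |(n:ℝ)|)) := by linarith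



noncomputable def Gq (m : ℤ) (q : ℤ × ℤ × ℤ) : ℝ :=
  1 / (((m:ℝ)^2 + (normSq3 q : ℝ) + 1) * ((normSq3 q : ℝ) + 1))

noncomputable def Fp (n : ℤ) (p : ℤ × ℤ × ℤ) : ℝ :=
  (n:ℝ)^2 * (p.1:ℝ)^2 * ((n:ℝ)^2 + 2*((normSq3 p:ℝ)+1)) /
    (((n:ℝ)^2 + (normSq3 p:ℝ) + 1)^2 * ((normSq3 p:ℝ)+1)^2)

lemma Gq_nonneg (m : ℤ) (q : ℤ × ℤ × ℤ) : 0 ≤ Gq m q := by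
  have h := normSq3_nonneg q
  unfold Gq
  positivity

lemma Fp_nonneg (n : ℤ) (p : ℤ × ℤ × ℤ) : 0 ≤ Fp n p := by
  have h := normSq3_nonneg p
  unfold Fp
  positivity

lemma sumG_le (m : ℤ) (s : Finset (ℤ × ℤ × ℤ)) :
    ∑ q ∈ s, Gq m q ≤ 104 / Real.sqrt ((m:ℝ)^2+1) := by
  obtain ⟨N, hs⟩ := exists_box s
  have h1 : ∑ q ∈ s, Gq m q ≤ ∑ q ∈ box N, Gq m q := by
    apply Finset.sum_le_sum_of_subset_of_nonneg hs
    intro q _ _; exact Gq_nonneg m q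
  set g : ℕ → ℝ := fun r => 1/(((m:ℝ)^2+(r:ℝ)^2+1)*((r:ℝ)^2+1)) with hgdef
  have hg : ∀ r, 0 ≤ g r := by intro r; rw [hgdef]; positivity
  have h0 : Gq m ((0:ℤ),(0:ℤ),(0:ℤ)) ≤ g 0 := by
    rw [hgdef]
    unfold Gq
    norm_num [normSq3]
  have hstep : ∀ (r : ℕ) (q : ℤ × ℤ × ℤ), q ∉ box r → Gq m q ≤ g (r+1) := by
    intro r q hq
    have hge := normSq3_ge hq
    have hS0 := normSq3_nonneg q
    rw [hgdef]
    unfold Gq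
    simp only []
    have hc : (((r+1:ℕ)):ℝ) = (r:ℝ)+1 := by push_cast; ring
    rw [hc]
    apply one_div_le_one_div_of_le (by positivity)
    have h1 : (0:ℝ) ≤ (m:ℝ)^2 := sq_nonneg _
    nlinarith [hge, hS0, sq_nonneg ((r:ℝ)+1)]
  have h2 := sum_box_le (Gq m) g hg h0 hstep N
  have h3 : ∑ r ∈ Finset.range (N+1), (24*(r:ℝ)^2+2) * g r
      ≤ ∑ r ∈ Finset.range (N+1), 26 * ((1:ℝ)/((m:ℝ)^2+(r:ℝ)^2+1)) := by
    apply Finset.sum_le_sum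
    intro r _
    rw [hgdef]
    simp only []
    rw [mul_one_div, mul_one_div, div_le_div_iff₀ (by positivity) (by positivity)]
    have hcert : (0:ℝ) ≤ ((m:ℝ)^2+(r:ℝ)^2+1)*(2*(r:ℝ)^2+24) := by positivity
    nlinarith [hcert]
  have h4 : ∑ r ∈ Finset.range (N+1), 26 * ((1:ℝ)/((m:ℝ)^2+(r:ℝ)^2+1))
      ≤ 26 * (4 / Real.sqrt ((m:ℝ)^2+1)) := by
    rw [← Finset.mul_sum]
    have h5 := L1 m N
    linarith [h5]
  calc ∑ q ∈ s, Gq m q ≤ ∑ q ∈ box N, Gq m q := h1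
    _ ≤ ∑ r ∈ Finset.range (N+1), (24*(r:ℝ)^2+2) * g r := h2
    _ ≤ ∑ r ∈ Finset.range (N+1), 26 * ((1:ℝ)/((m:ℝ)^2+(r:ℝ)^2+1)) := h3
    _ ≤ 26 * (4 / Real.sqrt ((m:ℝ)^2+1)) := h4
    _ = 104 / Real.sqrt ((m:ℝ)^2+1) := by ring

lemma Fp_div_le (n : ℤ) (p : ℤ × ℤ × ℤ) (t : ℝ) (ht : 0 ≤ t)
    (hStge : t ≤ (normSq3 p:ℝ)) :
    Fp n p / Real.sqrt ((p.1:ℝ)^2+1) ≤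
      2*(n:ℝ)^2/(((n:ℝ)^2+t+1)*((t+1)*Real.sqrt (t+1))) := by
  set S := (normSq3 p:ℝ) with hSdef
  have hS0 : 0 ≤ S := normSq3_nonneg p
  have haS : (p.1:ℝ)^2 ≤ S := by
    rw [hSdef, normSq3_cast]
    nlinarith [sq_nonneg ((p.2.1:ℝ)), sq_nonneg ((p.2.2:ℝ))]
  set a : ℝ := (p.1:ℝ)^2 with hadef
  have ha0 : 0 ≤ a := sq_nonneg _
  set sa := Real.sqrt (a+1) with hsadef
  set sS := Real.sqrt (S+1) with hsSdef
  set st := Real.sqrt (t+1) with hstdef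
  have hsa0 : 0 < sa := Real.sqrt_pos.mpr (by linarith)
  have hsS0 : 0 < sS := Real.sqrt_pos.mpr (by linarith)
  have hst0 : 0 < st := Real.sqrt_pos.mpr (by linarith)
  have hsasq : sa^2 = a+1 := Real.sq_sqrt (by linarith)
  have hsSsq : sS^2 = S+1 := Real.sq_sqrt (by linarith)
  have hstsq : st^2 = t+1 := Real.sq_sqrt (by linarith)
  have hsa_le : sa ≤ sS := Real.sqrt_le_sqrt (by linarith)
  have hst_le : st ≤ sS := Real.sqrt_le_sqrt (by linarith)
  have hn2 : (0:ℝ) ≤ (n:ℝ)^2 := sq_nonneg _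
  have hD1 : (0:ℝ) < (n:ℝ)^2 + S + 1 := by nlinarith
  have hD2 : (0:ℝ) < S + 1 := by linarith
  have key1 : Fp n p ≤ 2*(n:ℝ)^2*a/(((n:ℝ)^2+S+1)*(S+1)^2) := by
    unfold Fp
    rw [← hSdef, ← hadef]
    rw [div_le_div_iff₀ (by positivity) (by positivity)]
    have hcert : (0:ℝ) ≤ (n:ℝ)^4 * a * (((n:ℝ)^2+S+1)*(S+1)^2) := by
      apply mul_nonneg (mul_nonneg (by positivity) ha0)
      apply mul_nonneg hD1.le (by positivity)
    nlinarith [hcert]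
  have key2 : 2*(n:ℝ)^2*a/(((n:ℝ)^2+S+1)*(S+1)^2) / sa
      ≤ 2*(n:ℝ)^2/(((n:ℝ)^2+S+1)*((S+1)*sS)) := by
    rw [div_div]
    rw [div_le_div_iff₀ (by positivity) (by positivity)]
    have hstep2 : a * sS ≤ (S+1) * sa := by
      nlinarith [mul_nonneg (mul_nonneg hsa0.le hsS0.le) (sub_nonneg.mpr hsa_le),
        hsS0.le, hsasq, hsSsq]
    have hcert : (0:ℝ) ≤ (2*(n:ℝ)^2*(((n:ℝ)^2+S+1)*(S+1))) * ((S+1)*sa - a*sS) := by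
      apply mul_nonneg
      · apply mul_nonneg (by positivity) (mul_nonneg hD1.le hD2.le)
      · linarith
    nlinarith [hcert]
  have key3 : 2*(n:ℝ)^2/(((n:ℝ)^2+S+1)*((S+1)*sS))
      ≤ 2*(n:ℝ)^2/(((n:ℝ)^2+t+1)*((t+1)*st)) := by
    apply div_le_div_of_nonneg_left (by positivity)
    · apply mul_pos (by nlinarith) (by positivity)
    · apply mul_le_mul (by linarith)
      · apply mul_le_mul (by linarith) hst_le hst0.le (by linarith)
      · positivity
      · linarith
  calc Fp n p / sa ≤ (2*(n:ℝ)^2*a/(((n:ℝ)^2+S+1)*(S+1)^2)) / sa := by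
        exact (div_le_div_iff_of_pos_right hsa0).mpr key1
    _ ≤ 2*(n:ℝ)^2/(((n:ℝ)^2+S+1)*((S+1)*sS)) := key2
    _ ≤ 2*(n:ℝ)^2/(((n:ℝ)^2+t+1)*((t+1)*st)) := key3


lemma sumF_le (n : ℤ) (s : Finset (ℤ × ℤ × ℤ)) :
    ∑ p ∈ s, Fp n p / Real.sqrt ((p.1:ℝ)^2+1)
      ≤ 260 * (1 + Real.log (1 + |(n:ℝ)|)) := by
  obtain ⟨N, hs⟩ := exists_box s
  set f : ℤ × ℤ × ℤ → ℝ := fun p => Fp n p / Real.sqrt ((p.1:ℝ)^2+1) with hfdef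
  have hfnn : ∀ p, 0 ≤ f p := by
    intro p
    apply div_nonneg (Fp_nonneg n p) (Real.sqrt_nonneg _)
  have h1 : ∑ p ∈ s, f p ≤ ∑ p ∈ box N, f p := by
    apply Finset.sum_le_sum_of_subset_of_nonneg hs
    intro p _ _; exact hfnn p
  set g : ℕ → ℝ := fun r =>
    2*(n:ℝ)^2/(((n:ℝ)^2+(r:ℝ)^2+1)*(((r:ℝ)^2+1)*Real.sqrt ((r:ℝ)^2+1))) with hgdef
  have hg : ∀ r, 0 ≤ g r := by
    intro r; rw [hgdef]; positivity
  have h0 : f ((0:ℤ),(0:ℤ),(0:ℤ)) ≤ g 0 := by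
    have : Fp n ((0:ℤ),(0:ℤ),(0:ℤ)) = 0 := by
      unfold Fp
      norm_num
    rw [hfdef]
    simp only [this, zero_div]
    exact hg 0
  have hstep : ∀ (r : ℕ) (p : ℤ × ℤ × ℤ), p ∉ box r → f p ≤ g (r+1) := by
    intro r p hp
    have hge := normSq3_ge hp
    have h := Fp_div_le n p (((r:ℝ)+1)^2) (by positivity) hge
    rw [hfdef, hgdef]
    simp only []
    convert h using 4 <;> push_cast <;> ring
  have h2 := sum_box_le f g hg h0 hstep N
  have h3 : ∑ r ∈ Finset.range (N+1), (24*(r:ℝ)^2+2) * g r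
      ≤ ∑ r ∈ Finset.range (N+1), 104 * ((n:ℝ)^2/(((n:ℝ)^2+(r:ℝ)^2+1)*((r:ℝ)+1))) := by
    apply Finset.sum_le_sum
    intro r _
    rw [hgdef]
    simp only []
    set sr := Real.sqrt ((r:ℝ)^2+1) with hsrdef
    have hsr0 : 0 < sr := Real.sqrt_pos.mpr (by positivity)
    have hsrsq : sr^2 = (r:ℝ)^2+1 := Real.sq_sqrt (by positivity)
    have h2sr : (r:ℝ)+1 ≤ 2*sr := by
      nlinarith [sq_nonneg ((r:ℝ)-1), hsr0.le, hsrsq]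
    have hD : (0:ℝ) < (n:ℝ)^2+(r:ℝ)^2+1 := by positivity
    have stepa : (24*(r:ℝ)^2+2) * (2*(n:ℝ)^2/(((n:ℝ)^2+(r:ℝ)^2+1)*(((r:ℝ)^2+1)*sr)))
        ≤ 52 * ((n:ℝ)^2/(((n:ℝ)^2+(r:ℝ)^2+1)*sr)) := by
      rw [mul_div_assoc', mul_div_assoc', div_le_div_iff₀ (by positivity) (by positivity)]
      have hcert : (0:ℝ) ≤ ((n:ℝ)^2*(((n:ℝ)^2+(r:ℝ)^2+1)*sr))*(4*(r:ℝ)^2+48) := by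
        apply mul_nonneg _ (by positivity)
        exact mul_nonneg (sq_nonneg _) (mul_nonneg hD.le hsr0.le)
      nlinarith [hcert]
    have stepb : 52 * ((n:ℝ)^2/(((n:ℝ)^2+(r:ℝ)^2+1)*sr))
        ≤ 104 * ((n:ℝ)^2/(((n:ℝ)^2+(r:ℝ)^2+1)*((r:ℝ)+1))) := by
      rw [mul_div_assoc', mul_div_assoc', div_le_div_iff₀ (by positivity) (by positivity)]
      have hcert : (0:ℝ) ≤ (52*(n:ℝ)^2*(((n:ℝ)^2+(r:ℝ)^2+1)))*(2*sr - ((r:ℝ)+1)) := by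
        apply mul_nonneg (by positivity)
        linarith
      nlinarith [hcert]
    linarith
  have h4 : ∑ r ∈ Finset.range (N+1), 104 * ((n:ℝ)^2/(((n:ℝ)^2+(r:ℝ)^2+1)*((r:ℝ)+1)))
      ≤ 104 * (5/2 * (1 + Real.log (1 + |(n:ℝ)|))) := by
    rw [← Finset.mul_sum]
    have h5 := L2 n N
    linarith [h5]
  calc ∑ p ∈ s, f p ≤ ∑ p ∈ box N, f p := h1
    _ ≤ ∑ r ∈ Finset.range (N+1), (24*(r:ℝ)^2+2) * g r := h2
    _ ≤ ∑ r ∈ Finset.range (N+1), 104 * ((n:ℝ)^2/(((n:ℝ)^2+(r:ℝ)^2+1)*((r:ℝ)+1))) := h3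
    _ ≤ 104 * (5/2 * (1 + Real.log (1 + |(n:ℝ)|))) := h4
    _ = 260 * (1 + Real.log (1 + |(n:ℝ)|)) := by ring

lemma a2_nonneg (n : ℤ) (x : (ℤ × ℤ × ℤ) × (ℤ × ℤ × ℤ)) : 0 ≤ a2Summand n x := by
  have h1 := normSq3_nonneg x.1
  have h2 := normSq3_nonneg x.2
  unfold a2Summand
  positivity

lemma a2_eq (n : ℤ) (p q : ℤ × ℤ × ℤ) :
    a2Summand n (p, q) = Fp n p * Gq p.1 q := by
  unfold a2Summand Fp Gq
  simp only []
  field_simp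

end A2aux

/-- Logarithmic bound on (a piece of) the renormalized amplitude of `M₂`. -/
theorem a2_log_bound :
    ∃ K : ℝ, 0 < K ∧ ∀ n : ℤ,
      (∑' pq : (ℤ × ℤ × ℤ) × (ℤ × ℤ × ℤ), a2Summand n pq) ≤
        K * Real.log (1 + Real.sqrt ((n : ℝ) ^ 2)) + K := by
  refine ⟨27040, by norm_num, fun n => ?_⟩
  have habs : Real.sqrt ((n:ℝ)^2) = |(n:ℝ)| := Real.sqrt_sq_eq_abs _
  have hlog0 : 0 ≤ Real.log (1 + |(n:ℝ)|) :=
    Real.log_nonneg (by nlinarith [abs_nonneg ((n:ℝ))])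
  rw [habs]
  apply tsum_le_of_sum_le' (by nlinarith)
  intro s
  set A := s.image Prod.fst with hA
  set B := s.image Prod.snd with hB
  have hsub : s ⊆ A ×ˢ B := by
    intro x hx
    rw [Finset.mem_product]
    exact ⟨Finset.mem_image_of_mem _ hx, Finset.mem_image_of_mem _ hx⟩
  have h1 : ∑ x ∈ s, a2Summand n x ≤ ∑ x ∈ A ×ˢ B, a2Summand n x := by
    apply Finset.sum_le_sum_of_subset_of_nonneg hsub
    intro x _ _; exact A2aux.a2_nonneg n x
  have h2 : ∑ x ∈ A ×ˢ B, a2Summand n x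
      = ∑ p ∈ A, A2aux.Fp n p * ∑ q ∈ B, A2aux.Gq p.1 q := by
    rw [Finset.sum_product]
    apply Finset.sum_congr rfl
    intro p _
    rw [Finset.mul_sum]
    apply Finset.sum_congr rfl
    intro q _
    exact A2aux.a2_eq n p q
  have h3 : ∑ p ∈ A, A2aux.Fp n p * ∑ q ∈ B, A2aux.Gq p.1 q
      ≤ ∑ p ∈ A, A2aux.Fp n p * (104 / Real.sqrt ((p.1:ℝ)^2+1)) := by
    apply Finset.sum_le_sum
    intro p _
    exact mul_le_mul_of_nonneg_left (A2aux.sumG_le p.1 B) (A2aux.Fp_nonneg n p)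
  have h4 : ∑ p ∈ A, A2aux.Fp n p * (104 / Real.sqrt ((p.1:ℝ)^2+1))
      = 104 * ∑ p ∈ A, A2aux.Fp n p / Real.sqrt ((p.1:ℝ)^2+1) := by
    rw [Finset.mul_sum]
    apply Finset.sum_congr rfl
    intro p _
    rw [mul_div_assoc']
    ring
  have h5 := A2aux.sumF_le n A
  calc ∑ x ∈ s, a2Summand n x
      ≤ ∑ x ∈ A ×ˢ B, a2Summand n x := h1
    _ = ∑ p ∈ A, A2aux.Fp n p * ∑ q ∈ B, A2aux.Gq p.1 q := h2
    _ ≤ ∑ p ∈ A, A2aux.Fp n p * (104 / Real.sqrt ((p.1:ℝ)^2+1)) := h3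
    _ = 104 * ∑ p ∈ A, A2aux.Fp n p / Real.sqrt ((p.1:ℝ)^2+1) := h4
    _ ≤ 104 * (260 * (1 + Real.log (1 + |(n:ℝ)|))) := by linarith [h5]
    _ = 27040 * Real.log (1 + |(n:ℝ)|) + 27040 := by ring
end

section
/- There is a constant K such that for every m, n ∈ ℤ, ∑_{p ∈ ℤ³} 1/((m² + ‖p‖² + 1)(n² + ‖p‖² + 1)) ≤ K/√(m² + n² + 1). -/
set_option maxHeartbeats 1000000

open Finset ENNReal

namespace Q0Aux

/-- telescoping: sum of 1/k^2 from N+1 to M is at most 1/N -/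
lemma sum_inv_sq_le {N : ℕ} (hN : 1 ≤ N) (M : ℤ) :
    ∑ k ∈ Finset.Icc ((N : ℤ) + 1) M, (1 : ℝ) / (k : ℝ) ^ 2 ≤ 1 / N := by
  have hNR : (1 : ℝ) ≤ (N : ℝ) := by exact_mod_cast hN
  rcases le_or_gt M (N : ℤ) with h | h
  · rw [Finset.Icc_eq_empty (by omega)]
    simp only [Finset.sum_empty]
    positivity
  · have key : ∀ m : ℤ, (N : ℤ) ≤ m →
        ∑ k ∈ Finset.Icc ((N : ℤ) + 1) m, (1 : ℝ) / (k : ℝ) ^ 2 ≤ 1 / N - 1 / m := by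
      intro m hm
      refine Int.le_induction (motive := fun m _ => ∑ k ∈ Finset.Icc ((N : ℤ) + 1) m, (1 : ℝ) / (k : ℝ) ^ 2 ≤ 1 / N - 1 / m) ?_ ?_ m hm
      · rw [Finset.Icc_eq_empty (by omega)]
        simp
      · intro m hm ih
        have hins : Finset.Icc ((N : ℤ) + 1) (m + 1)
            = insert (m + 1) (Finset.Icc ((N : ℤ) + 1) m) := by
          ext k
          simp only [Finset.mem_Icc, Finset.mem_insert]
          omega
        rw [hins, Finset.sum_insert (by simp only [Finset.mem_Icc]; omega)]
        have hmR : (1 : ℝ) ≤ (m : ℝ) := by exact_mod_cast le_trans (by exact_mod_cast hN) hm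
        have h1 : (0 : ℝ) < (m : ℝ) := by linarith
        have h2 : (0 : ℝ) < (m : ℝ) + 1 := by linarith
        have hstep : (1 : ℝ) / ((m : ℝ) + 1) ^ 2 ≤ 1 / (m : ℝ) - 1 / ((m : ℝ) + 1) := by
          rw [div_sub_div _ _ (ne_of_gt h1) (ne_of_gt h2),
            div_le_div_iff₀ (by positivity) (by positivity)]
          ring_nf
          nlinarith
        push_cast
        push_cast at ih
        linarith
    have h2 := key M (by omega)
    have hMR : (0 : ℝ) < (M : ℝ) := by exact_mod_cast lt_of_lt_of_le (by positivity) h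
    have : (0:ℝ) < 1 / (M:ℝ) := by positivity
    linarith

/-- sum of 1/sqrt k from 1 to M is at most 2 sqrt M -/
lemma sum_inv_sqrt_le (M : ℤ) (hM : 0 ≤ M) :
    ∑ k ∈ Finset.Icc (1 : ℤ) M, 1 / Real.sqrt (k : ℝ) ≤ 2 * Real.sqrt (M : ℝ) := by
  refine Int.le_induction (motive := fun m _ => ∑ k ∈ Finset.Icc (1 : ℤ) m, 1 / Real.sqrt (k : ℝ) ≤ 2 * Real.sqrt (m : ℝ)) ?_ ?_ M hM
  · show ∑ k ∈ Finset.Icc (1:ℤ) 0, 1 / Real.sqrt (k : ℝ) ≤ 2 * Real.sqrt ((0:ℤ) : ℝ)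
    rw [Finset.Icc_eq_empty (by omega)]
    simp
  · intro m hm ih
    have hins : Finset.Icc (1 : ℤ) (m + 1) = insert (m + 1) (Finset.Icc (1 : ℤ) m) := by
      ext k
      simp only [Finset.mem_Icc, Finset.mem_insert]
      omega
    rw [hins, Finset.sum_insert (by simp only [Finset.mem_Icc]; omega)]
    have hmR : (0 : ℝ) ≤ (m : ℝ) := by exact_mod_cast hm
    have hs0 : 0 ≤ Real.sqrt (m : ℝ) := Real.sqrt_nonneg _
    have ht0 : 0 < Real.sqrt ((m : ℝ) + 1) := Real.sqrt_pos.mpr (by linarith)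
    have hs2 : Real.sqrt (m : ℝ) ^ 2 = (m : ℝ) := Real.sq_sqrt hmR
    have ht2 : Real.sqrt ((m : ℝ) + 1) ^ 2 = (m : ℝ) + 1 := Real.sq_sqrt (by linarith)
    have hstep : 1 / Real.sqrt ((m : ℝ) + 1)
        ≤ 2 * Real.sqrt ((m : ℝ) + 1) - 2 * Real.sqrt (m : ℝ) := by
      rw [div_le_iff₀ ht0]
      nlinarith
    push_cast
    linarith



lemma sum_Icc_symm (g : ℤ → ℝ) (hev : ∀ k, g (-k) = g k) (M : ℤ) (hM : 0 ≤ M) :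
    ∑ k ∈ Finset.Icc (-M) M, g k = g 0 + 2 * ∑ k ∈ Finset.Icc 1 M, g k := by
  have hsplit : Finset.Icc (-M) M = Finset.Icc (-M) (-1) ∪ Finset.Icc 0 M := by
    ext k
    simp only [Finset.mem_Icc, Finset.mem_union]
    omega
  have hdisj : Disjoint (Finset.Icc (-M) (-1)) (Finset.Icc (0:ℤ) M) := by
    rw [Finset.disjoint_left]
    intro k hk hk'
    simp only [Finset.mem_Icc] at hk hk'
    omega
  rw [hsplit, Finset.sum_union hdisj]
  have hneg : ∑ k ∈ Finset.Icc (-M) (-1), g k = ∑ k ∈ Finset.Icc (1:ℤ) M, g k := by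
    refine Finset.sum_nbij' (fun k => -k) (fun k => -k) ?_ ?_ ?_ ?_ ?_
    · intro k hk
      simp only [Finset.mem_Icc] at hk ⊢
      omega
    · intro k hk
      simp only [Finset.mem_Icc] at hk ⊢
      omega
    · intro k _
      ring
    · intro k _
      ring
    · intro k _
      rw [hev]
  have h0 : Finset.Icc (0:ℤ) M = insert 0 (Finset.Icc 1 M) := by
    ext k
    simp only [Finset.mem_Icc, Finset.mem_insert]
    omega
  rw [hneg, h0, Finset.sum_insert (by simp only [Finset.mem_Icc]; omega)]
  ring

lemma split_sum (f : ℤ → ℝ) (a M D : ℝ) (ha : 1 ≤ a)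
    (hf : ∀ k, 0 ≤ f k) (hM : 0 ≤ M) (hD : 0 ≤ D)
    (hbox : ∀ k : ℤ, (k : ℝ) ^ 2 ≤ a → f k ≤ M)
    (htail : ∀ k : ℤ, a < (k : ℝ) ^ 2 → f k ≤ D / (k : ℝ) ^ 2) :
    ∑' k : ℤ, ENNReal.ofReal (f k)
      ≤ ENNReal.ofReal (3 * Real.sqrt a * M + 4 * D / Real.sqrt a) := by
  have ha0 : (0:ℝ) ≤ a := by linarith
  have hsa1 : (1:ℝ) ≤ Real.sqrt a := by
    rw [show (1:ℝ) = Real.sqrt 1 by simp]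
    exact Real.sqrt_le_sqrt ha
  have hsa0 : (0:ℝ) < Real.sqrt a := by linarith
  set N : ℕ := ⌊Real.sqrt a⌋₊ with hNdef
  have hN1 : 1 ≤ N := Nat.le_floor (by exact_mod_cast hsa1)
  have hNle : (N : ℝ) ≤ Real.sqrt a := Nat.floor_le (by positivity)
  have hNgt : Real.sqrt a < N + 1 := Nat.lt_floor_add_one _
  have h2N : Real.sqrt a ≤ 2 * N := by
    have : (1:ℝ) ≤ (N:ℝ) := by exact_mod_cast hN1
    linarith
  have hNR0 : (0:ℝ) < (N:ℝ) := by exact_mod_cast hN1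
  -- membership facts
  have memb : ∀ k : ℤ, (k : ℝ) ^ 2 ≤ a → k ∈ Finset.Icc (-(N:ℤ)) (N:ℤ) := by
    intro k hk
    have h1 : |(k:ℝ)| ≤ Real.sqrt a := Real.abs_le_sqrt hk
    have h2 : (k.natAbs : ℝ) ≤ Real.sqrt a := by
      rw [Nat.cast_natAbs, Int.cast_abs]
      exact h1
    have h3 : k.natAbs ≤ N := Nat.le_floor h2
    simp only [Finset.mem_Icc]
    omega
  have tailmem : ∀ k : ℤ, a < (k : ℝ) ^ 2 → N + 1 ≤ k.natAbs := by
    intro k hk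
    have h1 : Real.sqrt a < Real.sqrt ((k:ℝ)^2) := Real.sqrt_lt_sqrt ha0 hk
    rw [Real.sqrt_sq_eq_abs] at h1
    have h2 : (N : ℝ) < (k.natAbs : ℝ) := by
      rw [Nat.cast_natAbs, Int.cast_abs]
      linarith
    have h3 : N < k.natAbs := by exact_mod_cast h2
    omega
  -- decomposition
  set u : ℤ → ℝ := fun k => if (k:ℝ)^2 ≤ a then M else 0 with hu
  set v : ℤ → ℝ := fun k => if a < (k:ℝ)^2 then D / (k:ℝ)^2 else 0 with hv
  have hv0 : ∀ k, 0 ≤ v k := by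
    intro k
    simp only [hv]
    split
    · positivity
    · exact le_rfl
  have hptwise : ∀ k, ENNReal.ofReal (f k)
      ≤ ENNReal.ofReal (u k) + ENNReal.ofReal (v k) := by
    intro k
    by_cases h : (k:ℝ)^2 ≤ a
    · refine le_trans (ENNReal.ofReal_le_ofReal ?_) le_self_add
      simpa [hu, h] using hbox k h
    · refine le_trans (ENNReal.ofReal_le_ofReal ?_) le_add_self
      push_neg at h
      simpa [hv, h] using htail k h
  calc ∑' k : ℤ, ENNReal.ofReal (f k)
      ≤ ∑' k : ℤ, (ENNReal.ofReal (u k) + ENNReal.ofReal (v k)) :=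
        Summable.tsum_le_tsum hptwise ENNReal.summable ENNReal.summable
    _ = (∑' k : ℤ, ENNReal.ofReal (u k)) + ∑' k : ℤ, ENNReal.ofReal (v k) :=
        ENNReal.tsum_add
    _ ≤ ENNReal.ofReal (3 * Real.sqrt a * M) + ENNReal.ofReal (4 * D / Real.sqrt a) := by
        gcongr
        · -- u part
          have hsupp : ∀ b ∉ Finset.Icc (-(N:ℤ)) (N:ℤ), ENNReal.ofReal (u b) = 0 := by
            intro k hk
            simp only [hu]
            rw [if_neg fun hc => hk (memb k hc)]
            simp
          rw [tsum_eq_sum hsupp]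
          calc ∑ k ∈ Finset.Icc (-(N:ℤ)) (N:ℤ), ENNReal.ofReal (u k)
                ≤ ∑ k ∈ Finset.Icc (-(N:ℤ)) (N:ℤ), ENNReal.ofReal M := by
                  refine Finset.sum_le_sum fun k _ => ENNReal.ofReal_le_ofReal ?_
                  simp only [hu]
                  split
                  · exact le_rfl
                  · exact hM
              _ = ((2 * N + 1 : ℕ) : ℝ≥0∞) * ENNReal.ofReal M := by
                  rw [Finset.sum_const, Int.card_Icc,
                    show ((N:ℤ) + 1 - -(N:ℤ)).toNat = 2 * N + 1 by omega, nsmul_eq_mul]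
              _ = ENNReal.ofReal ((2 * N + 1 : ℕ) * M) := by
                  rw [ENNReal.ofReal_mul (by positivity), ENNReal.ofReal_natCast]
              _ ≤ ENNReal.ofReal (3 * Real.sqrt a * M) := by
                  refine ENNReal.ofReal_le_ofReal ?_
                  have : ((2 * N + 1 : ℕ) : ℝ) ≤ 3 * Real.sqrt a := by
                    push_cast
                    linarith
                  exact mul_le_mul_of_nonneg_right this hM
        · -- v part
          refine tsum_le_of_sum_le' (by positivity) fun s => ?_
          rw [← ENNReal.ofReal_sum_of_nonneg fun k _ => hv0 k]
          refine ENNReal.ofReal_le_ofReal ?_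
          set M₀ : ℕ := s.sup Int.natAbs with hM₀
          have hsub : s ⊆ Finset.Icc (-(M₀:ℤ)) (M₀:ℤ) := by
            intro k hk
            have := Finset.le_sup (f := Int.natAbs) hk
            simp only [Finset.mem_Icc]
            omega
          calc ∑ k ∈ s, v k
              ≤ ∑ k ∈ Finset.Icc (-(M₀:ℤ)) (M₀:ℤ), v k :=
                Finset.sum_le_sum_of_subset_of_nonneg hsub fun k _ _ => hv0 k
            _ = v 0 + 2 * ∑ k ∈ Finset.Icc (1:ℤ) (M₀:ℤ), v k := by
                refine sum_Icc_symm v ?_ _ (by positivity)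
                intro k
                simp only [hv]
                push_cast
                rw [neg_sq]
            _ ≤ 4 * D / Real.sqrt a := by
                have hv0eq : v 0 = 0 := by
                  simp only [hv]
                  rw [if_neg (by push_cast; simp only [not_lt]; norm_num; linarith)]
                have hsum : ∑ k ∈ Finset.Icc (1:ℤ) (M₀:ℤ), v k ≤ D / N := by
                  have hrw : ∑ k ∈ Finset.Icc (1:ℤ) (M₀:ℤ), v k
                      = ∑ k ∈ (Finset.Icc (1:ℤ) (M₀:ℤ)).filter (fun k : ℤ => a < (k:ℝ)^2),
                          D / (k:ℝ)^2 := by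
                    rw [Finset.sum_filter]
                  rw [hrw]
                  have hsub2 : (Finset.Icc (1:ℤ) (M₀:ℤ)).filter (fun k : ℤ => a < (k:ℝ)^2)
                      ⊆ Finset.Icc ((N:ℤ)+1) (M₀:ℤ) := by
                    intro k hk
                    simp only [Finset.mem_filter, Finset.mem_Icc] at hk
                    have := tailmem k hk.2
                    simp only [Finset.mem_Icc]
                    omega
                  calc ∑ k ∈ (Finset.Icc (1:ℤ) (M₀:ℤ)).filter (fun k : ℤ => a < (k:ℝ)^2), D / (k:ℝ)^2
                      ≤ ∑ k ∈ Finset.Icc ((N:ℤ)+1) (M₀:ℤ), D / (k:ℝ)^2 := by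
                        refine Finset.sum_le_sum_of_subset_of_nonneg hsub2 fun k hk _ => ?_
                        simp only [Finset.mem_Icc] at hk
                        have : (0:ℝ) < (k:ℝ) := by exact_mod_cast by omega
                        positivity
                    _ = D * ∑ k ∈ Finset.Icc ((N:ℤ)+1) (M₀:ℤ), 1 / (k:ℝ)^2 := by
                        rw [Finset.mul_sum]
                        congr 1
                        ext k
                        ring
                    _ ≤ D * (1 / N) := by
                        exact mul_le_mul_of_nonneg_left (sum_inv_sq_le hN1 _) hD
                    _ = D / N := by ring
                have hfin : (1:ℝ) / N ≤ 2 / Real.sqrt a := by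
                  rw [div_le_div_iff₀ hNR0 hsa0]
                  linarith
                have : D / N ≤ 2 * D / Real.sqrt a := by
                  rw [div_le_div_iff₀ hNR0 hsa0]
                  nlinarith [mul_le_mul_of_nonneg_left h2N hD]
                rw [hv0eq]
                rw [show 4 * D / Real.sqrt a = 2 * (2 * D / Real.sqrt a) by ring]
                linarith
    _ = ENNReal.ofReal (3 * Real.sqrt a * M + 4 * D / Real.sqrt a) :=
        (ENNReal.ofReal_add (by positivity) (by positivity)).symm

lemma lemE (a c : ℝ) (ha : 1 ≤ a) (hc : 0 ≤ c) :
    ∑' k : ℤ, ENNReal.ofReal (c / (a + (k:ℝ)^2))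
      ≤ ENNReal.ofReal (7 * c / Real.sqrt a) := by
  have ha0 : (0:ℝ) < a := by linarith
  have hsa : (0:ℝ) < Real.sqrt a := Real.sqrt_pos.mpr ha0
  have hsq : Real.sqrt a * Real.sqrt a = a := Real.mul_self_sqrt (le_of_lt ha0)
  refine le_trans (split_sum _ a (c/a) c ha ?_ (by positivity) hc ?_ ?_)
    (ENNReal.ofReal_le_ofReal (le_of_eq ?_))
  · intro k
    have : (0:ℝ) < a + (k:ℝ)^2 := by nlinarith [sq_nonneg ((k:ℝ))]
    positivity
  · intro k _
    exact div_le_div_of_nonneg_left hc ha0 (by nlinarith [sq_nonneg ((k:ℝ))])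
  · intro k hk
    have hk0 : (0:ℝ) < (k:ℝ)^2 := by linarith
    exact div_le_div_of_nonneg_left hc hk0 (by linarith)
  · set s := Real.sqrt a with hs
    rw [← hsq]
    field_simp
    ring

lemma lemA (a c : ℝ) (ha : 1 ≤ a) (hc : 0 ≤ c) :
    ∑' k : ℤ, ENNReal.ofReal (c / (a + (k:ℝ)^2)^2)
      ≤ ENNReal.ofReal (7 * c / (a * Real.sqrt a)) := by
  have ha0 : (0:ℝ) < a := by linarith
  have hsa : (0:ℝ) < Real.sqrt a := Real.sqrt_pos.mpr ha0
  have hsq : Real.sqrt a * Real.sqrt a = a := Real.mul_self_sqrt (le_of_lt ha0)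
  refine le_trans (split_sum _ a (c/a^2) (c/a) ha ?_ (by positivity) (by positivity) ?_ ?_)
    (ENNReal.ofReal_le_ofReal (le_of_eq ?_))
  · intro k
    have : (0:ℝ) < a + (k:ℝ)^2 := by nlinarith [sq_nonneg ((k:ℝ))]
    positivity
  · intro k _
    have h1 : (0:ℝ) < a^2 := by positivity
    exact div_le_div_of_nonneg_left hc h1 (by nlinarith [sq_nonneg ((k:ℝ))])
  · intro k hk
    have hk0 : (0:ℝ) < (k:ℝ)^2 := by linarith
    have h1 : (0:ℝ) < a * (k:ℝ)^2 := by positivity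
    have h2 : c / (a + (k:ℝ)^2)^2 ≤ c / (a * (k:ℝ)^2) :=
      div_le_div_of_nonneg_left hc h1 (by nlinarith)
    rw [div_div]
    exact h2
  · set s := Real.sqrt a with hs
    rw [← hsq]
    field_simp
    ring

lemma lemB (a c : ℝ) (ha : 1 ≤ a) (hc : 0 ≤ c) :
    ∑' k : ℤ, ENNReal.ofReal (c / ((a + (k:ℝ)^2) * Real.sqrt (a + (k:ℝ)^2)))
      ≤ ENNReal.ofReal (7 * c / a) := by
  have ha0 : (0:ℝ) < a := by linarith
  have hsa : (0:ℝ) < Real.sqrt a := Real.sqrt_pos.mpr ha0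
  have hsq : Real.sqrt a * Real.sqrt a = a := Real.mul_self_sqrt (le_of_lt ha0)
  refine le_trans
    (split_sum _ a (c/(a * Real.sqrt a)) (c / Real.sqrt a) ha ?_ (by positivity)
      (by positivity) ?_ ?_)
    (ENNReal.ofReal_le_ofReal (le_of_eq ?_))
  · intro k
    have h0 : (0:ℝ) < a + (k:ℝ)^2 := by nlinarith [sq_nonneg ((k:ℝ))]
    have h1 : (0:ℝ) < Real.sqrt (a + (k:ℝ)^2) := Real.sqrt_pos.mpr h0
    positivity
  · intro k _
    have h0 : a ≤ a + (k:ℝ)^2 := by nlinarith [sq_nonneg ((k:ℝ))]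
    have h1 : (0:ℝ) < a * Real.sqrt a := by positivity
    refine div_le_div_of_nonneg_left hc h1 ?_
    exact mul_le_mul h0 (Real.sqrt_le_sqrt h0) (le_of_lt hsa) (by linarith)
  · intro k hk
    have hk0 : (0:ℝ) < (k:ℝ)^2 := by linarith
    have h1 : (0:ℝ) < (k:ℝ)^2 * Real.sqrt a := by positivity
    have h2 : c / ((a + (k:ℝ)^2) * Real.sqrt (a + (k:ℝ)^2)) ≤ c / ((k:ℝ)^2 * Real.sqrt a) := by
      refine div_le_div_of_nonneg_left hc h1 ?_
      refine mul_le_mul (by linarith) (Real.sqrt_le_sqrt (by linarith)) (le_of_lt hsa) (by nlinarith)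
    calc c / ((a + (k:ℝ)^2) * Real.sqrt (a + (k:ℝ)^2)) ≤ c / ((k:ℝ)^2 * Real.sqrt a) := h2
      _ = c / Real.sqrt a / (k:ℝ)^2 := by rw [div_div]; ring_nf
  · set s := Real.sqrt a with hs
    rw [← hsq]
    field_simp
    ring

lemma lemT (a c : ℝ) (ha : 1 ≤ a) (hc : 0 ≤ c) :
    ∑' k : ℤ, ENNReal.ofReal (if a < (k:ℝ)^2 then c / ((k:ℝ)^2 + 1) else 0)
      ≤ ENNReal.ofReal (4 * c / Real.sqrt a) := by
  have ha0 : (0:ℝ) < a := by linarith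
  have hsa : (0:ℝ) < Real.sqrt a := Real.sqrt_pos.mpr ha0
  refine le_trans (split_sum _ a 0 c ha ?_ le_rfl hc ?_ ?_)
    (ENNReal.ofReal_le_ofReal (le_of_eq ?_))
  · intro k
    split
    · have : (0:ℝ) < (k:ℝ)^2 + 1 := by positivity
      positivity
    · exact le_rfl
  · intro k hk
    rw [if_neg (not_lt.mpr hk)]
  · intro k hk
    rw [if_pos hk]
    have hk0 : (0:ℝ) < (k:ℝ)^2 := by linarith
    exact div_le_div_of_nonneg_left hc hk0 (by linarith)
  · ring

lemma lemQ (a c : ℝ) (ha : 1 ≤ a) (hc : 0 ≤ c) :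
    ∑' k : ℤ, ENNReal.ofReal
        (if (k:ℝ)^2 ≤ a then c / Real.sqrt (Real.sqrt ((k:ℝ)^2 + 1)) else 0)
      ≤ ENNReal.ofReal (5 * c * Real.sqrt (Real.sqrt a)) := by
  have ha0 : (0:ℝ) ≤ a := by linarith
  have hsa1 : (1:ℝ) ≤ Real.sqrt a := by
    rw [show (1:ℝ) = Real.sqrt 1 by simp]
    exact Real.sqrt_le_sqrt ha
  have hssa1 : (1:ℝ) ≤ Real.sqrt (Real.sqrt a) := by
    rw [show (1:ℝ) = Real.sqrt 1 by simp]
    exact Real.sqrt_le_sqrt hsa1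
  set N : ℕ := ⌊Real.sqrt a⌋₊ with hNdef
  have hNle : (N : ℝ) ≤ Real.sqrt a := Nat.floor_le (by positivity)
  set q : ℤ → ℝ := fun k => if (k:ℝ)^2 ≤ a then c / Real.sqrt (Real.sqrt ((k:ℝ)^2 + 1)) else 0
    with hqdef
  have hq0 : ∀ k, 0 ≤ q k := by
    intro k
    simp only [hqdef]
    split
    · have h1 : (0:ℝ) < (k:ℝ)^2 + 1 := by positivity
      positivity
    · exact le_rfl
  have memb : ∀ k : ℤ, (k : ℝ) ^ 2 ≤ a → k ∈ Finset.Icc (-(N:ℤ)) (N:ℤ) := by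
    intro k hk
    have h1 : |(k:ℝ)| ≤ Real.sqrt a := Real.abs_le_sqrt hk
    have h2 : (k.natAbs : ℝ) ≤ Real.sqrt a := by
      rw [Nat.cast_natAbs, Int.cast_abs]
      exact h1
    have h3 : k.natAbs ≤ N := Nat.le_floor h2
    simp only [Finset.mem_Icc]
    omega
  have hsupp : ∀ b ∉ Finset.Icc (-(N:ℤ)) (N:ℤ), ENNReal.ofReal (q b) = 0 := by
    intro k hk
    simp only [hqdef]
    rw [if_neg fun hcc => hk (memb k hcc)]
    simp
  rw [tsum_eq_sum hsupp, ← ENNReal.ofReal_sum_of_nonneg fun k _ => hq0 k]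
  refine ENNReal.ofReal_le_ofReal ?_
  have hsymm : ∑ k ∈ Finset.Icc (-(N:ℤ)) (N:ℤ), q k
      = q 0 + 2 * ∑ k ∈ Finset.Icc (1:ℤ) (N:ℤ), q k := by
    refine sum_Icc_symm q ?_ _ (by positivity)
    intro k
    simp only [hqdef]
    push_cast
    rw [neg_sq]
  rw [hsymm]
  have hq0val : q 0 = c := by
    simp only [hqdef]
    rw [if_pos (by push_cast; norm_num; linarith)]
    norm_num
  have hsum : ∑ k ∈ Finset.Icc (1:ℤ) (N:ℤ), q k
      ≤ c * (2 * Real.sqrt (N : ℝ)) := by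
    calc ∑ k ∈ Finset.Icc (1:ℤ) (N:ℤ), q k
        ≤ ∑ k ∈ Finset.Icc (1:ℤ) (N:ℤ), c * (1 / Real.sqrt (k:ℝ)) := by
          refine Finset.sum_le_sum fun k hk => ?_
          simp only [Finset.mem_Icc] at hk
          have hk1 : (1:ℝ) ≤ (k:ℝ) := by exact_mod_cast hk.1
          have hsk : (0:ℝ) < Real.sqrt (k:ℝ) := Real.sqrt_pos.mpr (by linarith)
          simp only [hqdef]
          split
          · rw [mul_one_div]
            refine div_le_div_of_nonneg_left hc hsk ?_
            refine Real.sqrt_le_sqrt ?_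
            have hx : Real.sqrt ((k:ℝ)^2 + 1) ^ 2 = (k:ℝ)^2 + 1 :=
              Real.sq_sqrt (by positivity)
            nlinarith [Real.sqrt_nonneg ((k:ℝ)^2+1)]
          · positivity
      _ = c * ∑ k ∈ Finset.Icc (1:ℤ) (N:ℤ), 1 / Real.sqrt (k:ℝ) := by
          rw [Finset.mul_sum]
      _ ≤ c * (2 * Real.sqrt (N:ℝ)) := by
          refine mul_le_mul_of_nonneg_left ?_ hc
          exact_mod_cast sum_inv_sqrt_le (N:ℤ) (by positivity)
  have hNs : Real.sqrt (N:ℝ) ≤ Real.sqrt (Real.sqrt a) := Real.sqrt_le_sqrt hNle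
  have : c * (2 * Real.sqrt (N:ℝ)) ≤ 2 * c * Real.sqrt (Real.sqrt a) := by
    nlinarith [Real.sqrt_nonneg ((N:ℝ))]
  nlinarith [Real.sqrt_nonneg (Real.sqrt a)]

end Q0Aux

namespace Q0Aux

lemma main_ennreal (m n : ℤ) :
    ∑' p : ℤ × ℤ × ℤ, ENNReal.ofReal
        (1 / (((m : ℝ) ^ 2 + (normSq3 p : ℝ) + 1) * ((n : ℝ) ^ 2 + (normSq3 p : ℝ) + 1)))
      ≤ ENNReal.ofReal (600 / Real.sqrt ((m : ℝ) ^ 2 + (n : ℝ) ^ 2 + 1)) := by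
  set B : ℝ := (m : ℝ) ^ 2 + (n : ℝ) ^ 2 + 1 with hBdef
  have hB : (1 : ℝ) ≤ B := by nlinarith [sq_nonneg ((m:ℝ)), sq_nonneg ((n:ℝ))]
  have hB0 : (0 : ℝ) < B := by linarith
  have hsB : (1 : ℝ) ≤ Real.sqrt B := by
    rw [show (1:ℝ) = Real.sqrt 1 by simp]
    exact Real.sqrt_le_sqrt hB
  have hsB0 : (0:ℝ) < Real.sqrt B := by linarith
  have hsqB : Real.sqrt B * Real.sqrt B = B := Real.mul_self_sqrt (by linarith)
  have hssB0 : (0:ℝ) < Real.sqrt (Real.sqrt B) := Real.sqrt_pos.mpr hsB0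
  have hssqB : Real.sqrt (Real.sqrt B) * Real.sqrt (Real.sqrt B) = Real.sqrt B :=
    Real.mul_self_sqrt (by positivity)
  -- majorants
  set g1 : ℤ × ℤ × ℤ → ℝ := fun p =>
    if (p.1:ℝ)^2 ≤ B ∧ (p.2.1:ℝ)^2 ≤ B then
      (1/B) / ((p.1:ℝ)^2 + (p.2.1:ℝ)^2 + 1 + (p.2.2:ℝ)^2) else 0 with hg1
  set g2 : ℤ × ℤ × ℤ → ℝ := fun p =>
    if B < (p.1:ℝ)^2 then
      1 / (((p.1:ℝ)^2 + 1 + (p.2.1:ℝ)^2 + (p.2.2:ℝ)^2)^2) else 0 with hg2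
  set g3 : ℤ × ℤ × ℤ → ℝ := fun p =>
    if B < (p.2.1:ℝ)^2 then
      1 / (((p.2.1:ℝ)^2 + 1 + (p.1:ℝ)^2 + (p.2.2:ℝ)^2)^2) else 0 with hg3
  have hg1nn : ∀ p, 0 ≤ g1 p := by
    rintro ⟨x, y, z⟩
    simp only [hg1]
    split
    · positivity
    · exact le_rfl
  have hg2nn : ∀ p, 0 ≤ g2 p := by
    rintro ⟨x, y, z⟩
    simp only [hg2]
    split
    · positivity
    · exact le_rfl
  have hg3nn : ∀ p, 0 ≤ g3 p := by
    rintro ⟨x, y, z⟩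
    simp only [hg3]
    split
    · positivity
    · exact le_rfl
  -- pointwise bound
  have key : ∀ p : ℤ × ℤ × ℤ,
      1 / (((m : ℝ) ^ 2 + (normSq3 p : ℝ) + 1) * ((n : ℝ) ^ 2 + (normSq3 p : ℝ) + 1))
        ≤ g1 p + g2 p + g3 p := by
    rintro ⟨x, y, z⟩
    have hs : (normSq3 (x, y, z) : ℝ) = (x:ℝ)^2 + (y:ℝ)^2 + (z:ℝ)^2 := by
      simp only [normSq3]
      push_cast
      ring
    rw [hs]
    set s : ℝ := (x:ℝ)^2 + (y:ℝ)^2 + (z:ℝ)^2 with hsdef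
    have hs0 : 0 ≤ s := by positivity
    have hd1 : (0:ℝ) < (m:ℝ)^2 + s + 1 := by positivity
    have hd2 : (0:ℝ) < (n:ℝ)^2 + s + 1 := by positivity
    by_cases h1 : (x:ℝ)^2 ≤ B ∧ (y:ℝ)^2 ≤ B
    · have : 1 / (((m : ℝ) ^ 2 + s + 1) * ((n : ℝ) ^ 2 + s + 1)) ≤ g1 (x, y, z) := by
        simp only [hg1, if_pos h1]
        rw [div_div]
        refine div_le_div_of_nonneg_left one_pos.le (by positivity) ?_
        have hexp : (x:ℝ)^2 + (y:ℝ)^2 + 1 + (z:ℝ)^2 = s + 1 := by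
          rw [hsdef]; ring
        rw [hexp]
        nlinarith [sq_nonneg ((m:ℝ)*(n:ℝ)), sq_nonneg ((m:ℝ)) , sq_nonneg ((n:ℝ))]
      have h2 := hg2nn (x, y, z)
      have h3 := hg3nn (x, y, z)
      linarith
    · rw [not_and_or] at h1
      rcases h1 with h1 | h1
      · push_neg at h1
        have : 1 / (((m : ℝ) ^ 2 + s + 1) * ((n : ℝ) ^ 2 + s + 1)) ≤ g2 (x, y, z) := by
          simp only [hg2, if_pos h1]
          refine div_le_div_of_nonneg_left one_pos.le (by positivity) ?_
          have hexp : (x:ℝ)^2 + 1 + (y:ℝ)^2 + (z:ℝ)^2 = s + 1 := by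
            rw [hsdef]; ring
          rw [hexp]
          nlinarith [sq_nonneg ((m:ℝ)), sq_nonneg ((n:ℝ)), sq_nonneg ((m:ℝ)*(n:ℝ))]
        have h2 := hg1nn (x, y, z)
        have h3 := hg3nn (x, y, z)
        linarith
      · push_neg at h1
        have : 1 / (((m : ℝ) ^ 2 + s + 1) * ((n : ℝ) ^ 2 + s + 1)) ≤ g3 (x, y, z) := by
          simp only [hg3, if_pos h1]
          refine div_le_div_of_nonneg_left one_pos.le (by positivity) ?_
          have hexp : (y:ℝ)^2 + 1 + (x:ℝ)^2 + (z:ℝ)^2 = s + 1 := by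
            rw [hsdef]; ring
          rw [hexp]
          nlinarith [sq_nonneg ((m:ℝ)), sq_nonneg ((n:ℝ)), sq_nonneg ((m:ℝ)*(n:ℝ))]
        have h2 := hg1nn (x, y, z)
        have h3 := hg2nn (x, y, z)
        linarith
  -- T1 bound
  have hT1 : ∑' p : ℤ × ℤ × ℤ, ENNReal.ofReal (g1 p)
      ≤ ENNReal.ofReal (175 / Real.sqrt B) := by
    rw [ENNReal.tsum_prod']
    have hzsum : ∀ x y : ℤ, ∑' z : ℤ, ENNReal.ofReal (g1 (x, y, z))
        ≤ ENNReal.ofReal (if (x:ℝ)^2 ≤ B ∧ (y:ℝ)^2 ≤ B then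
            7 * (1/B) / Real.sqrt ((x:ℝ)^2 + (y:ℝ)^2 + 1) else 0) := by
      intro x y
      by_cases h : (x:ℝ)^2 ≤ B ∧ (y:ℝ)^2 ≤ B
      · simp only [hg1, if_pos h]
        exact lemE ((x:ℝ)^2 + (y:ℝ)^2 + 1) (1/B)
          (by nlinarith [sq_nonneg ((x:ℝ)), sq_nonneg ((y:ℝ))]) (by positivity)
      · simp only [hg1, if_neg h]
        simp
    have hysum : ∀ x : ℤ, ∑' y : ℤ, ∑' z : ℤ, ENNReal.ofReal (g1 (x, y, z))
        ≤ ENNReal.ofReal (if (x:ℝ)^2 ≤ B then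
            5 * (7 * (1/B) / Real.sqrt (Real.sqrt ((x:ℝ)^2 + 1))) * Real.sqrt (Real.sqrt B)
            else 0) := by
      intro x
      by_cases hx : (x:ℝ)^2 ≤ B
      · rw [if_pos hx]
        set cx : ℝ := 7 * (1/B) / Real.sqrt (Real.sqrt ((x:ℝ)^2 + 1)) with hcx
        have hcx0 : 0 ≤ cx := by positivity
        calc ∑' y : ℤ, ∑' z : ℤ, ENNReal.ofReal (g1 (x, y, z))
            ≤ ∑' y : ℤ, ENNReal.ofReal (if (y:ℝ)^2 ≤ B then
                cx / Real.sqrt (Real.sqrt ((y:ℝ)^2 + 1)) else 0) := by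
              refine Summable.tsum_le_tsum (fun y => le_trans (hzsum x y)
                (ENNReal.ofReal_le_ofReal ?_)) ENNReal.summable ENNReal.summable
              by_cases hy : (y:ℝ)^2 ≤ B
              · rw [if_pos ⟨hx, hy⟩, if_pos hy, hcx, div_div]
                have hx1 : (0:ℝ) < (x:ℝ)^2 + 1 := by positivity
                have hy1 : (0:ℝ) < (y:ℝ)^2 + 1 := by positivity
                refine div_le_div_of_nonneg_left (by positivity) (by positivity) ?_
                have e1 : Real.sqrt (Real.sqrt ((x:ℝ)^2+1)) * Real.sqrt (Real.sqrt ((y:ℝ)^2+1))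
                    = Real.sqrt (Real.sqrt (((x:ℝ)^2+1) * ((y:ℝ)^2+1))) := by
                  rw [← Real.sqrt_mul (Real.sqrt_nonneg _), ← Real.sqrt_mul hx1.le]
                rw [e1]
                have e2 : (x:ℝ)^2 + (y:ℝ)^2 + 1
                    = Real.sqrt (((x:ℝ)^2 + (y:ℝ)^2 + 1)^2) := by
                  rw [Real.sqrt_sq (by positivity)]
                rw [e2]
                refine Real.sqrt_le_sqrt ?_
                have e4 : ((x:ℝ)^2+1) * ((y:ℝ)^2+1) ≤ ((x:ℝ)^2 + (y:ℝ)^2 + 1)^2 := by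
                  nlinarith [sq_nonneg ((x:ℝ)*(y:ℝ))]
                exact Real.sqrt_le_sqrt e4
              · have hcn : ¬((x:ℝ)^2 ≤ B ∧ (y:ℝ)^2 ≤ B) := fun hc => hy hc.2
                rw [if_neg hcn, if_neg hy]
          _ ≤ ENNReal.ofReal (5 * cx * Real.sqrt (Real.sqrt B)) := lemQ B cx hB hcx0
      · rw [if_neg hx]
        have : ∀ y : ℤ, ∑' z : ℤ, ENNReal.ofReal (g1 (x, y, z)) = 0 := by
          intro y
          have : ∀ z : ℤ, ENNReal.ofReal (g1 (x, y, z)) = 0 := by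
            intro z
            simp only [hg1, if_neg (fun hc : (x:ℝ)^2 ≤ B ∧ (y:ℝ)^2 ≤ B => hx hc.1)]
            simp
          simp [this]
        simp [this]
    calc ∑' x : ℤ, ∑' q : ℤ × ℤ, ENNReal.ofReal (g1 (x, q))
        = ∑' x : ℤ, ∑' y : ℤ, ∑' z : ℤ, ENNReal.ofReal (g1 (x, y, z)) := by
          refine tsum_congr fun x => ?_
          rw [ENNReal.tsum_prod']
      _ ≤ ∑' x : ℤ, ENNReal.ofReal (if (x:ℝ)^2 ≤ B then
            (35 * Real.sqrt (Real.sqrt B) / B) / Real.sqrt (Real.sqrt ((x:ℝ)^2 + 1))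
            else 0) := by
          refine Summable.tsum_le_tsum (fun x => le_trans (hysum x)
            (ENNReal.ofReal_le_ofReal ?_)) ENNReal.summable ENNReal.summable
          by_cases hx : (x:ℝ)^2 ≤ B
          · rw [if_pos hx, if_pos hx]
            have h1 : (0:ℝ) < Real.sqrt (Real.sqrt ((x:ℝ)^2+1)) := by
              refine Real.sqrt_pos.mpr (Real.sqrt_pos.mpr (by positivity))
            refine le_of_eq ?_
            have hBne : B ≠ 0 := ne_of_gt hB0
            have h1ne : Real.sqrt (Real.sqrt ((x:ℝ)^2+1)) ≠ 0 := ne_of_gt h1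
            field_simp
            try ring
            try exact Or.inl trivial
          · rw [if_neg hx, if_neg hx]
      _ ≤ ENNReal.ofReal (5 * (35 * Real.sqrt (Real.sqrt B) / B) * Real.sqrt (Real.sqrt B)) :=
          lemQ B _ hB (by positivity)
      _ = ENNReal.ofReal (175 / Real.sqrt B) := by
          congr 1
          rw [show 5 * (35 * Real.sqrt (Real.sqrt B) / B) * Real.sqrt (Real.sqrt B)
              = 175 * (Real.sqrt (Real.sqrt B) * Real.sqrt (Real.sqrt B)) / B by ring, hssqB]
          rw [div_eq_div_iff (ne_of_gt hB0) (ne_of_gt hsB0), mul_assoc, hsqB]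
  -- T2 bound
  have hT2 : ∑' p : ℤ × ℤ × ℤ, ENNReal.ofReal (g2 p)
      ≤ ENNReal.ofReal (196 / Real.sqrt B) := by
    rw [ENNReal.tsum_prod']
    have hzsum : ∀ x y : ℤ, ∑' z : ℤ, ENNReal.ofReal (g2 (x, y, z))
        ≤ ENNReal.ofReal (if B < (x:ℝ)^2 then
            7 * 1 / (((x:ℝ)^2 + 1 + (y:ℝ)^2) * Real.sqrt ((x:ℝ)^2 + 1 + (y:ℝ)^2)) else 0) := by
      intro x y
      by_cases h : B < (x:ℝ)^2
      · simp only [hg2, if_pos h]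
        exact lemA ((x:ℝ)^2 + 1 + (y:ℝ)^2) 1
          (by nlinarith [sq_nonneg ((x:ℝ)), sq_nonneg ((y:ℝ))]) (by positivity)
      · simp only [hg2, if_neg h]
        simp
    have hysum : ∀ x : ℤ, ∑' y : ℤ, ∑' z : ℤ, ENNReal.ofReal (g2 (x, y, z))
        ≤ ENNReal.ofReal (if B < (x:ℝ)^2 then 7 * (7 * 1) / ((x:ℝ)^2 + 1) else 0) := by
      intro x
      by_cases hx : B < (x:ℝ)^2
      · rw [if_pos hx]
        calc ∑' y : ℤ, ∑' z : ℤ, ENNReal.ofReal (g2 (x, y, z))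
            ≤ ∑' y : ℤ, ENNReal.ofReal
                (7 * 1 / (((x:ℝ)^2 + 1 + (y:ℝ)^2) * Real.sqrt ((x:ℝ)^2 + 1 + (y:ℝ)^2))) := by
              refine Summable.tsum_le_tsum (fun y => le_trans (hzsum x y)
                (ENNReal.ofReal_le_ofReal ?_)) ENNReal.summable ENNReal.summable
              rw [if_pos hx]
          _ ≤ ENNReal.ofReal (7 * (7 * 1) / ((x:ℝ)^2 + 1)) :=
              lemB ((x:ℝ)^2 + 1) (7 * 1)
                (by nlinarith [sq_nonneg ((x:ℝ))]) (by positivity)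
      · rw [if_neg hx]
        have : ∀ y : ℤ, ∑' z : ℤ, ENNReal.ofReal (g2 (x, y, z)) = 0 := by
          intro y
          have : ∀ z : ℤ, ENNReal.ofReal (g2 (x, y, z)) = 0 := by
            intro z
            simp only [hg2, if_neg hx]
            simp
          simp [this]
        simp [this]
    calc ∑' x : ℤ, ∑' q : ℤ × ℤ, ENNReal.ofReal (g2 (x, q))
        = ∑' x : ℤ, ∑' y : ℤ, ∑' z : ℤ, ENNReal.ofReal (g2 (x, y, z)) := by
          refine tsum_congr fun x => ?_
          rw [ENNReal.tsum_prod']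
      _ ≤ ∑' x : ℤ, ENNReal.ofReal
            (if B < (x:ℝ)^2 then 7 * (7 * 1) / ((x:ℝ)^2 + 1) else 0) :=
          Summable.tsum_le_tsum (fun x => hysum x) ENNReal.summable ENNReal.summable
      _ ≤ ENNReal.ofReal (4 * (7 * (7 * 1)) / Real.sqrt B) := lemT B _ hB (by norm_num)
      _ = ENNReal.ofReal (196 / Real.sqrt B) := by norm_num
  -- T3 bound
  have hT3 : ∑' p : ℤ × ℤ × ℤ, ENNReal.ofReal (g3 p)
      ≤ ENNReal.ofReal (196 / Real.sqrt B) := by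
    rw [ENNReal.tsum_prod']
    have hswap : ∑' x : ℤ, ∑' q : ℤ × ℤ, ENNReal.ofReal (g3 (x, q))
        = ∑' y : ℤ, ∑' x : ℤ, ∑' z : ℤ, ENNReal.ofReal (g3 (x, y, z)) := by
      rw [show (∑' x : ℤ, ∑' q : ℤ × ℤ, ENNReal.ofReal (g3 (x, q)))
          = ∑' x : ℤ, ∑' y : ℤ, ∑' z : ℤ, ENNReal.ofReal (g3 (x, y, z)) from
        tsum_congr fun x => ENNReal.tsum_prod']
      exact ENNReal.tsum_comm
    rw [hswap]
    have hzsum : ∀ y x : ℤ, ∑' z : ℤ, ENNReal.ofReal (g3 (x, y, z))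
        ≤ ENNReal.ofReal (if B < (y:ℝ)^2 then
            7 * 1 / (((y:ℝ)^2 + 1 + (x:ℝ)^2) * Real.sqrt ((y:ℝ)^2 + 1 + (x:ℝ)^2)) else 0) := by
      intro y x
      by_cases h : B < (y:ℝ)^2
      · simp only [hg3, if_pos h]
        exact lemA ((y:ℝ)^2 + 1 + (x:ℝ)^2) 1
          (by nlinarith [sq_nonneg ((x:ℝ)), sq_nonneg ((y:ℝ))]) (by positivity)
      · simp only [hg3, if_neg h]
        simp
    have hxsum : ∀ y : ℤ, ∑' x : ℤ, ∑' z : ℤ, ENNReal.ofReal (g3 (x, y, z))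
        ≤ ENNReal.ofReal (if B < (y:ℝ)^2 then 7 * (7 * 1) / ((y:ℝ)^2 + 1) else 0) := by
      intro y
      by_cases hy : B < (y:ℝ)^2
      · rw [if_pos hy]
        calc ∑' x : ℤ, ∑' z : ℤ, ENNReal.ofReal (g3 (x, y, z))
            ≤ ∑' x : ℤ, ENNReal.ofReal
                (7 * 1 / (((y:ℝ)^2 + 1 + (x:ℝ)^2) * Real.sqrt ((y:ℝ)^2 + 1 + (x:ℝ)^2))) := by
              refine Summable.tsum_le_tsum (fun x => le_trans (hzsum y x)
                (ENNReal.ofReal_le_ofReal ?_)) ENNReal.summable ENNReal.summable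
              rw [if_pos hy]
          _ ≤ ENNReal.ofReal (7 * (7 * 1) / ((y:ℝ)^2 + 1)) :=
              lemB ((y:ℝ)^2 + 1) (7 * 1)
                (by nlinarith [sq_nonneg ((y:ℝ))]) (by positivity)
      · rw [if_neg hy]
        have : ∀ x : ℤ, ∑' z : ℤ, ENNReal.ofReal (g3 (x, y, z)) = 0 := by
          intro x
          have : ∀ z : ℤ, ENNReal.ofReal (g3 (x, y, z)) = 0 := by
            intro z
            simp only [hg3, if_neg hy]
            simp
          simp [this]
        simp [this]
    calc ∑' y : ℤ, ∑' x : ℤ, ∑' z : ℤ, ENNReal.ofReal (g3 (x, y, z))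
        ≤ ∑' y : ℤ, ENNReal.ofReal
            (if B < (y:ℝ)^2 then 7 * (7 * 1) / ((y:ℝ)^2 + 1) else 0) :=
          Summable.tsum_le_tsum (fun y => hxsum y) ENNReal.summable ENNReal.summable
      _ ≤ ENNReal.ofReal (4 * (7 * (7 * 1)) / Real.sqrt B) := lemT B _ hB (by norm_num)
      _ = ENNReal.ofReal (196 / Real.sqrt B) := by norm_num
  -- combine
  calc ∑' p : ℤ × ℤ × ℤ, ENNReal.ofReal
        (1 / (((m : ℝ) ^ 2 + (normSq3 p : ℝ) + 1) * ((n : ℝ) ^ 2 + (normSq3 p : ℝ) + 1)))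
      ≤ ∑' p : ℤ × ℤ × ℤ,
          (ENNReal.ofReal (g1 p) + (ENNReal.ofReal (g2 p) + ENNReal.ofReal (g3 p))) := by
        refine Summable.tsum_le_tsum (fun p => ?_) ENNReal.summable ENNReal.summable
        calc ENNReal.ofReal
              (1 / (((m : ℝ) ^ 2 + (normSq3 p : ℝ) + 1) * ((n : ℝ) ^ 2 + (normSq3 p : ℝ) + 1)))
            ≤ ENNReal.ofReal (g1 p + (g2 p + g3 p)) := by
              refine ENNReal.ofReal_le_ofReal ?_
              have := key p
              linarith
          _ = ENNReal.ofReal (g1 p) + (ENNReal.ofReal (g2 p) + ENNReal.ofReal (g3 p)) := by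
              rw [ENNReal.ofReal_add (hg1nn p) (by positivity),
                ENNReal.ofReal_add (hg2nn p) (hg3nn p)]
    _ = (∑' p : ℤ × ℤ × ℤ, ENNReal.ofReal (g1 p))
        + ((∑' p : ℤ × ℤ × ℤ, ENNReal.ofReal (g2 p))
          + ∑' p : ℤ × ℤ × ℤ, ENNReal.ofReal (g3 p)) := by
        rw [ENNReal.tsum_add, ENNReal.tsum_add]
    _ ≤ ENNReal.ofReal (175 / Real.sqrt B)
        + (ENNReal.ofReal (196 / Real.sqrt B) + ENNReal.ofReal (196 / Real.sqrt B)) := by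
        gcongr
    _ = ENNReal.ofReal (175 / Real.sqrt B + (196 / Real.sqrt B + 196 / Real.sqrt B)) := by
        rw [ENNReal.ofReal_add (by positivity) (by positivity),
          ENNReal.ofReal_add (by positivity) (by positivity)]
    _ ≤ ENNReal.ofReal (600 / Real.sqrt B) := by
        refine ENNReal.ofReal_le_ofReal ?_
        rw [← add_div, ← add_div]
        gcongr
        norm_num
end Q0Aux


/-- Diagonal estimate on `Q₀`: there is `K` with
`∑_{p ∈ ℤ³} 1/((m²+‖p‖²+1)(n²+‖p‖²+1)) ≤ K/√(m²+n²+1)` for all `m, n ∈ ℤ`. -/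
theorem q0_diagonal_bound :
    ∃ K : ℝ, ∀ m n : ℤ,
      (∑' p : ℤ × ℤ × ℤ,
          1 / (((m : ℝ) ^ 2 + (normSq3 p : ℝ) + 1) * ((n : ℝ) ^ 2 + (normSq3 p : ℝ) + 1))) ≤
        K / Real.sqrt ((m : ℝ) ^ 2 + (n : ℝ) ^ 2 + 1) := by
  refine ⟨600, fun m n => ?_⟩
  have hFnn : ∀ p : ℤ × ℤ × ℤ,
      0 ≤ 1 / (((m : ℝ) ^ 2 + (normSq3 p : ℝ) + 1) * ((n : ℝ) ^ 2 + (normSq3 p : ℝ) + 1)) := by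
    intro p
    have h0 : (0:ℝ) ≤ ((normSq3 p : ℤ) : ℝ) := by
      have : (0:ℤ) ≤ normSq3 p := by unfold normSq3; positivity
      exact_mod_cast this
    positivity
  have hRHS : (0:ℝ) ≤ 600 / Real.sqrt ((m:ℝ)^2 + (n:ℝ)^2 + 1) := by positivity
  by_cases hs : Summable (fun p : ℤ × ℤ × ℤ =>
      1 / (((m : ℝ) ^ 2 + (normSq3 p : ℝ) + 1) * ((n : ℝ) ^ 2 + (normSq3 p : ℝ) + 1)))
  · have h1 := ENNReal.ofReal_tsum_of_nonneg hFnn hs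
    have h2 := Q0Aux.main_ennreal m n
    rw [← h1] at h2
    exact (ENNReal.ofReal_le_ofReal_iff hRHS).mp h2
  · rw [tsum_eq_zero_of_not_summable hs]
    exact hRHS
end

section
/- Let M > 1 be an integer, j ≥ 1, and define Q₀,≤j as the diagonal operator on ℓ²(ℤ²) with entries q_j(m,n) = ∑_{p ∈ ℤ³, 1+m²+n²+‖p‖² ≤ cutoff} 1/((m²+‖p‖²+1)(n²+‖p‖²+1)) restricted to 1+m²+n² ≤ M^{2j}, and Q₀,j = Q₀,≤j − Q₀,≤j−1. Then there is a constant K (depending on M only) with: ‖Q₀,j‖ ≤ K·M^{−j}, Tr Q₀,j ≤ K·M^{j}, and Tr(Q₀,j²) ≤ K. -/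
set_option maxHeartbeats 1000000

/-- The diagonal entry `q₀(m,n) = ∑_{p∈ℤ³} 1/((m²+‖p‖²+1)(n²+‖p‖²+1))` of `Q₀`. -/
noncomputable def q0Entry (m n : ℤ) : ℝ :=
  ∑' p : ℤ × ℤ × ℤ,
    1 / (((m : ℝ) ^ 2 + (normSq3 p : ℝ) + 1) * ((n : ℝ) ^ 2 + (normSq3 p : ℝ) + 1))

/-- The diagonal entry of the slice operator `Q₀,j = Q₀,≤j − Q₀,≤j−1`, where `Q₀,≤j`
is `Q₀` cut off to `1 + m² + n² ≤ M^{2j}`. -/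
noncomputable def q0SliceEntry (M : ℕ) (j : ℕ) (m n : ℤ) : ℝ :=
  (if 1 + m ^ 2 + n ^ 2 ≤ (M : ℤ) ^ (2 * j) then q0Entry m n else 0) -
  (if 1 + m ^ 2 + n ^ 2 ≤ (M : ℤ) ^ (2 * (j - 1)) then q0Entry m n else 0)

lemma q0Entry_nonneg (m n : ℤ) : 0 ≤ q0Entry m n := by
  apply tsum_nonneg
  intro p
  have hr : (0:ℝ) ≤ ((p.1 ^ 2 + p.2.1 ^ 2 + p.2.2 ^ 2 : ℤ) : ℝ) := by positivity
  have h1 : (0:ℝ) < (m : ℝ) ^ 2 + (normSq3 p : ℝ) + 1 := by unfold normSq3; positivity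
  have h2 : (0:ℝ) < (n : ℝ) ^ 2 + (normSq3 p : ℝ) + 1 := by unfold normSq3; positivity
  positivity

lemma normSq3_nonneg (p : ℤ × ℤ × ℤ) : 0 ≤ normSq3 p := by
  unfold normSq3; positivity

open Finset in
lemma q0Entry_le_sqrt (m n : ℤ) :
    q0Entry m n ≤ 512 / Real.sqrt ((1 + m ^ 2 + n ^ 2 : ℤ) : ℝ) := by
  have hNZ1 : (1:ℤ) ≤ 1 + m ^ 2 + n ^ 2 := by nlinarith [sq_nonneg m, sq_nonneg n]
  set Nr : ℝ := ((1 + m ^ 2 + n ^ 2 : ℤ) : ℝ) with hNrdef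
  have hNr1 : 1 ≤ Nr := by rw [hNrdef]; exact_mod_cast hNZ1
  have hNr0 : 0 < Nr := by linarith
  have hsq0 : 0 < Real.sqrt Nr := Real.sqrt_pos.mpr hNr0
  set Nn : ℕ := (1 + m ^ 2 + n ^ 2 : ℤ).toNat with hNndef
  have hNnr : (Nn : ℝ) = Nr := by
    rw [hNndef, hNrdef]
    exact_mod_cast congrArg (Int.cast : ℤ → ℝ) (Int.toNat_of_nonneg (by linarith))
  have hNn0 : Nn ≠ 0 := by rw [hNndef]; omega
  set T := Nat.log 4 Nn with hTdef
  have h4T : ((4:ℝ)) ^ T ≤ Nr := by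
    rw [← hNnr]
    exact_mod_cast Nat.pow_log_le_self 4 hNn0
  have hT4 : Nr < (4:ℝ) ^ (T + 1) := by
    rw [← hNnr]
    exact_mod_cast Nat.lt_pow_succ_log_self (by norm_num) Nn
  have h2T : (2:ℝ) ^ T ≤ Real.sqrt Nr := by
    rw [Real.le_sqrt (by positivity) (le_of_lt hNr0)]
    calc ((2:ℝ) ^ T) ^ 2 = 4 ^ T := by rw [← pow_mul, pow_mul']; norm_num
    _ ≤ Nr := h4T
  have hS2T : Real.sqrt Nr < (2:ℝ) ^ (T + 1) := by
    rw [Real.sqrt_lt' (by positivity)]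
    calc Nr < 4 ^ (T+1) := hT4
    _ = ((2:ℝ) ^ (T+1)) ^ 2 := by rw [← pow_mul, pow_mul']; norm_num
  have hcond : ∀ t : ℕ, ((4:ℝ) ^ t ≤ Nr ↔ t ≤ T) := by
    intro t
    rw [← hNnr, show ((4:ℝ) ^ t) = ((4 ^ t : ℕ) : ℝ) by push_cast; ring, Nat.cast_le, hTdef]
    exact (Nat.le_log_iff_pow_le (by norm_num) hNn0).symm
  set f : ℤ × ℤ × ℤ → ℝ := fun p =>
    1 / (((m : ℝ) ^ 2 + (normSq3 p : ℝ) + 1) * ((n : ℝ) ^ 2 + (normSq3 p : ℝ) + 1)) with hf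
  have hfnonneg : ∀ p, 0 ≤ f p := by
    intro p
    have hr : (0:ℝ) ≤ (normSq3 p : ℝ) := by exact_mod_cast normSq3_nonneg p
    have h1 : (0:ℝ) < (m : ℝ) ^ 2 + (normSq3 p : ℝ) + 1 := by positivity
    have h2 : (0:ℝ) < (n : ℝ) ^ 2 + (normSq3 p : ℝ) + 1 := by positivity
    positivity
  set τ : ℤ × ℤ × ℤ → ℕ := fun p => Nat.log 4 (1 + normSq3 p).toNat with hτ
  set e : ℕ → ℝ := fun t => if t ≤ T then 128 * (2:ℝ) ^ t / Nr else 128 * ((2:ℝ) ^ t)⁻¹ with he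
  have he0 : ∀ t, 0 ≤ e t := by
    intro t; rw [he]; dsimp only; split <;> positivity
  have hshell : ∀ p : ℤ × ℤ × ℤ, (4:ℝ) ^ (τ p) ≤ 1 + (normSq3 p : ℝ) ∧
      1 + (normSq3 p : ℝ) < (4:ℝ) ^ (τ p + 1) := by
    intro p
    have hr0 : 0 ≤ normSq3 p := normSq3_nonneg p
    have hu : ((1 + normSq3 p).toNat : ℝ) = 1 + (normSq3 p : ℝ) := by
      have := Int.toNat_of_nonneg (show (0:ℤ) ≤ 1 + normSq3 p by omega)
      exact_mod_cast congrArg (Int.cast : ℤ → ℝ) this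
    have hu0 : (1 + normSq3 p).toNat ≠ 0 := by omega
    constructor
    · rw [← hu]; exact_mod_cast Nat.pow_log_le_self 4 hu0
    · rw [← hu]; exact_mod_cast Nat.lt_pow_succ_log_self (by norm_num) (1 + normSq3 p).toNat
  -- the key per-fiber bound
  have key : ∀ (F : Finset (ℤ × ℤ × ℤ)) (t : ℕ),
      ∑ p ∈ F.filter (fun p => τ p = t), f p ≤ e t := by
    intro F t
    set β : ℝ := if t ≤ T then 2 / (Nr * 4 ^ t) else 2 / ((4:ℝ) ^ t * 4 ^ t) with hβ
    have hβ0 : 0 ≤ β := by rw [hβ]; split <;> positivity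
    have hterm : ∀ p ∈ F.filter (fun p => τ p = t), f p ≤ β := by
      intro p hp
      have hpt : τ p = t := by
        have := (Finset.mem_filter.mp hp).2
        exact this
      obtain ⟨hl, _⟩ := hshell p
      rw [hpt] at hl
      have hr : (0:ℝ) ≤ (normSq3 p : ℝ) := by exact_mod_cast normSq3_nonneg p
      set r : ℝ := (normSq3 p : ℝ) with hrdef
      have ha : (0:ℝ) ≤ (m:ℝ)^2 := sq_nonneg _
      have hb : (0:ℝ) ≤ (n:ℝ)^2 := sq_nonneg _
      have hD1 : (0:ℝ) < (m : ℝ) ^ 2 + r + 1 := by positivity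
      have hD2 : (0:ℝ) < (n : ℝ) ^ 2 + r + 1 := by positivity
      have hhalf : (Nr + r) * (1 + r) ≤ 2 * (((m : ℝ) ^ 2 + r + 1) * ((n : ℝ) ^ 2 + r + 1)) := by
        rw [hNrdef]; push_cast
        nlinarith [mul_nonneg ha hb, mul_nonneg ha hr, mul_nonneg hb hr, sq_nonneg r]
      show f p ≤ β
      rw [hf, hβ]
      dsimp only
      rw [← hrdef]
      split
      · rename_i htT
        have h4t : (4:ℝ) ^ t ≤ Nr := (hcond t).mpr htT
        rw [div_le_div_iff₀ (by positivity) (by positivity)]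
        have hm : Nr * 4 ^ t ≤ (Nr + r) * (1 + r) := by
          have h1 : Nr ≤ Nr + r := by linarith
          have h2 : (4:ℝ) ^ t ≤ 1 + r := hl
          have := mul_le_mul h1 h2 (by positivity) (by linarith)
          linarith
        nlinarith
      · have hm : (4:ℝ) ^ t * 4 ^ t ≤ (Nr + r) * (1 + r) := by
          have h2 : (4:ℝ) ^ t ≤ 1 + r := hl
          have h1 : (4:ℝ) ^ t ≤ Nr + r := by linarith
          have := mul_le_mul h1 h2 (by positivity) (by linarith)
          linarith
        rw [div_le_div_iff₀ (by positivity) (by positivity)]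
        nlinarith
    have hcard : (F.filter (fun p => τ p = t)).card ≤ 64 * 8 ^ t := by
      have hsubset : F.filter (fun p => τ p = t) ⊆
          (Finset.Icc (-((2:ℤ) ^ (t+1) - 1)) ((2:ℤ) ^ (t+1) - 1)) ×ˢ
          ((Finset.Icc (-((2:ℤ) ^ (t+1) - 1)) ((2:ℤ) ^ (t+1) - 1)) ×ˢ
           (Finset.Icc (-((2:ℤ) ^ (t+1) - 1)) ((2:ℤ) ^ (t+1) - 1))) := by
        intro p hp
        have hpt : τ p = t := (Finset.mem_filter.mp hp).2
        obtain ⟨_, hrt⟩ := hshell p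
        rw [hpt] at hrt
        have hrint : normSq3 p < (4:ℤ) ^ (t+1) := by
          have h4 : ((normSq3 p : ℝ)) < (((4:ℤ) ^ (t+1) : ℤ) : ℝ) := by push_cast; linarith
          exact_mod_cast h4
        have hc0 : (0:ℤ) < 2 ^ (t+1) := by positivity
        have hsq : ((2:ℤ) ^ (t+1)) ^ 2 = (4:ℤ) ^ (t+1) := by rw [← pow_mul, pow_mul']; norm_num
        have hbnd : ∀ x : ℤ, x ^ 2 ≤ normSq3 p →
            x ∈ Finset.Icc (-((2:ℤ) ^ (t+1) - 1)) ((2:ℤ) ^ (t+1) - 1) := by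
          intro x hx
          have hx2 : x ^ 2 < ((2:ℤ) ^ (t+1)) ^ 2 := by rw [hsq]; omega
          rw [Finset.mem_Icc]
          constructor <;> nlinarith
        have h1 : p.1 ^ 2 ≤ normSq3 p := by
          have := sq_nonneg p.2.1; have := sq_nonneg p.2.2; unfold normSq3; nlinarith
        have h2 : p.2.1 ^ 2 ≤ normSq3 p := by
          have := sq_nonneg p.1; have := sq_nonneg p.2.2; unfold normSq3; nlinarith
        have h3 : p.2.2 ^ 2 ≤ normSq3 p := by
          have := sq_nonneg p.1; have := sq_nonneg p.2.1; unfold normSq3; nlinarith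
        rw [Finset.mem_product, Finset.mem_product]
        exact ⟨hbnd _ h1, hbnd _ h2, hbnd _ h3⟩
      calc (F.filter (fun p => τ p = t)).card ≤ _ := Finset.card_le_card hsubset
      _ ≤ 64 * 8 ^ t := by
        rw [Finset.card_product, Finset.card_product, Int.card_Icc]
        have hv : ((2:ℤ) ^ (t+1) - 1 + 1 - -(2 ^ (t+1) - 1)).toNat = 2 ^ (t+2) - 1 := by
          have : ((2:ℤ) ^ (t+1) - 1 + 1 - -(2 ^ (t+1) - 1)) = 2 * 2 ^ (t+1) - 1 := by ring
          rw [this]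
          have h2 : (2:ℤ) * 2 ^ (t+1) = ((2 ^ (t+2) : ℕ) : ℤ) := by push_cast; ring
          omega
        rw [hv]
        have hle : 2 ^ (t+2) - 1 ≤ 4 * 2 ^ t := by
          have : 2 ^ (t+2) = 4 * 2 ^ t := by ring
          omega
        calc (2 ^ (t+2) - 1) * ((2 ^ (t+2) - 1) * (2 ^ (t+2) - 1))
            ≤ (4 * 2 ^ t) * ((4 * 2 ^ t) * (4 * 2 ^ t)) := by
              exact Nat.mul_le_mul hle (Nat.mul_le_mul hle hle)
        _ = 64 * 8 ^ t := by ring_nf; rw [show (8:ℕ)^t = 2^t * 4^t by rw [show (8:ℕ) = 2 * 4 by norm_num, mul_pow], show (4:ℕ)^t = 2^t*2^t by rw [show (4:ℕ) = 2*2 by norm_num, mul_pow]]; ring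
    calc ∑ p ∈ F.filter (fun p => τ p = t), f p
        ≤ (F.filter (fun p => τ p = t)).card • β := Finset.sum_le_card_nsmul _ _ _ hterm
    _ = ((F.filter (fun p => τ p = t)).card : ℝ) * β := by rw [nsmul_eq_mul]
    _ ≤ (64 * 8 ^ t : ℕ) * β := by
        apply mul_le_mul_of_nonneg_right _ hβ0
        exact_mod_cast hcard
    _ ≤ e t := by
        rw [hβ, he]
        dsimp only
        push_cast
        have h84 : (8:ℝ) ^ t = 2 ^ t * 4 ^ t := by
          rw [show (8:ℝ) = 2 * 4 by norm_num, mul_pow]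
        have h42 : (4:ℝ) ^ t = 2 ^ t * 2 ^ t := by
          rw [show (4:ℝ) = 2 * 2 by norm_num, mul_pow]
        have h2t : (0:ℝ) < 2 ^ t := by positivity
        by_cases htT : t ≤ T
        · rw [if_pos htT, if_pos htT, h84]
          rw [div_eq_mul_inv, div_eq_mul_inv, mul_inv]
          have h4t : ((4:ℝ) ^ t)⁻¹ * (4:ℝ) ^ t = 1 := by
            field_simp
          calc (64:ℝ) * (2 ^ t * 4 ^ t) * (2 * (Nr⁻¹ * ((4:ℝ) ^ t)⁻¹))
              = 128 * 2 ^ t * Nr⁻¹ * (((4:ℝ) ^ t)⁻¹ * (4:ℝ) ^ t) := by ring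
          _ = 128 * 2 ^ t * Nr⁻¹ := by rw [h4t]; ring
          _ ≤ 128 * 2 ^ t * Nr⁻¹ := le_rfl
        · rw [if_neg htT, if_neg htT, h84, h42]
          have hinv : ((2:ℝ) ^ t * 2 ^ t * ((2:ℝ) ^ t * 2 ^ t))⁻¹ * ((2:ℝ)^t * (2^t * 2^t)) = ((2:ℝ)^t)⁻¹ := by
            field_simp
          calc (64:ℝ) * (2 ^ t * (2 ^ t * 2 ^ t)) * (2 / (2 ^ t * 2 ^ t * (2 ^ t * 2 ^ t)))
              = 128 * (((2:ℝ) ^ t * 2 ^ t * ((2:ℝ) ^ t * 2 ^ t))⁻¹ * ((2:ℝ)^t * (2^t * 2^t))) := by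
                rw [div_eq_mul_inv]; ring
          _ = 128 * ((2:ℝ)^t)⁻¹ := by rw [hinv]
          _ ≤ 128 * ((2:ℝ)^t)⁻¹ := le_rfl
  -- now the global bound
  show (∑' p, f p) ≤ 512 / Real.sqrt Nr
  apply tsum_le_of_sum_le' (by positivity)
  intro F
  set K := F.sup τ + 1 with hK
  have hmaps : ∀ p ∈ F, τ p ∈ Finset.range K := by
    intro p hp
    rw [Finset.mem_range, hK]
    exact Nat.lt_succ_of_le (Finset.le_sup hp)
  rw [← Finset.sum_fiberwise_of_maps_to hmaps f]
  calc ∑ t ∈ Finset.range K, ∑ p ∈ F.filter (fun p => τ p = t), f p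
      ≤ ∑ t ∈ Finset.range K, e t := Finset.sum_le_sum (fun t _ => key F t)
  _ ≤ 512 / Real.sqrt Nr := by
      have hsplit : ∀ t, e t ≤ (if t ≤ T then 128 * (2:ℝ) ^ t / Nr else 0) +
          (if T + 1 ≤ t then 128 * ((2:ℝ) ^ t)⁻¹ else 0) := by
        intro t; rw [he]; dsimp only
        by_cases htT : t ≤ T
        · have h2 : ¬ (T + 1 ≤ t) := fun h => Nat.not_succ_le_self T (le_trans h htT)
          simp only [if_pos htT, if_neg h2, add_zero]
          exact le_rfl
        · have h2 : T + 1 ≤ t := not_le.mp htT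
          simp only [if_neg htT, if_pos h2, zero_add]
          exact le_rfl
      calc ∑ t ∈ Finset.range K, e t
          ≤ ∑ t ∈ Finset.range K, ((if t ≤ T then 128 * (2:ℝ) ^ t / Nr else 0) +
            (if T + 1 ≤ t then 128 * ((2:ℝ) ^ t)⁻¹ else 0)) :=
            Finset.sum_le_sum (fun t _ => hsplit t)
      _ = (∑ t ∈ Finset.range K, (if t ≤ T then 128 * (2:ℝ) ^ t / Nr else 0)) +
          (∑ t ∈ Finset.range K, (if T + 1 ≤ t then 128 * ((2:ℝ) ^ t)⁻¹ else 0)) :=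
            Finset.sum_add_distrib
      _ ≤ 256 / Real.sqrt Nr + 256 / Real.sqrt Nr := by
          gcongr
          · -- c-part
            calc ∑ t ∈ Finset.range K, (if t ≤ T then 128 * (2:ℝ) ^ t / Nr else 0)
                ≤ ∑ t ∈ Finset.range (T+1), 128 * (2:ℝ) ^ t / Nr := by
                  rw [← Finset.sum_filter]
                  apply Finset.sum_le_sum_of_subset_of_nonneg
                  · intro t ht
                    rw [Finset.mem_filter] at ht
                    rw [Finset.mem_range]
                    omega
                  · intro t _ _; positivity
            _ = 128 / Nr * ∑ t ∈ Finset.range (T+1), (2:ℝ) ^ t := by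
                  rw [Finset.mul_sum]; apply Finset.sum_congr rfl; intro t _; ring
            _ = 128 / Nr * (2 ^ (T+1) - 1) := by
                  rw [geom_sum_eq (by norm_num : (2:ℝ) ≠ 1)]; norm_num
            _ ≤ 128 / Nr * (2 * 2 ^ T) := by
                  apply mul_le_mul_of_nonneg_left _ (by positivity)
                  rw [pow_succ]; linarith
            _ ≤ 256 / Real.sqrt Nr := by
                  rw [div_mul_eq_mul_div, div_le_div_iff₀ hNr0 hsq0]
                  have hh := mul_le_mul_of_nonneg_right h2T (Real.sqrt_nonneg Nr)
                  rw [Real.mul_self_sqrt (le_of_lt hNr0)] at hh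
                  nlinarith [hh]
          · -- d-part
            calc ∑ t ∈ Finset.range K, (if T + 1 ≤ t then 128 * ((2:ℝ) ^ t)⁻¹ else 0)
                ≤ ∑ t ∈ Finset.Ico (T+1) (max K (T+1)), 128 * ((2:ℝ) ^ t)⁻¹ := by
                  rw [← Finset.sum_filter]
                  apply Finset.sum_le_sum_of_subset_of_nonneg
                  · intro t ht
                    rw [Finset.mem_filter, Finset.mem_range] at ht
                    rw [Finset.mem_Ico]
                    constructor
                    · omega
                    · calc t < K := ht.1
                      _ ≤ max K (T+1) := le_max_left _ _
                  · intro t _ _; positivity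
            _ ≤ 256 / Real.sqrt Nr := by
                  rw [Finset.sum_Ico_eq_sum_range]
                  have hstep : ∀ u : ℕ, 128 * ((2:ℝ) ^ (T + 1 + u))⁻¹
                      = (128 * ((2:ℝ) ^ (T+1))⁻¹) * (2⁻¹) ^ u := by
                    intro u
                    rw [pow_add, mul_inv, inv_pow]; ring
                  rw [Finset.sum_congr rfl (fun u _ => hstep u), ← Finset.mul_sum]
                  have hgeom : ∑ u ∈ Finset.range (max K (T+1) - (T+1)), ((2:ℝ)⁻¹) ^ u ≤ 2 := by
                    rw [geom_sum_eq (by norm_num : (2:ℝ)⁻¹ ≠ 1)]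
                    have : (0:ℝ) < ((2:ℝ)⁻¹) ^ (max K (T+1) - (T+1)) := by positivity
                    rw [div_le_iff_of_neg (by norm_num : (2:ℝ)⁻¹ - 1 < 0)]
                    linarith
                  calc (128 * ((2:ℝ) ^ (T+1))⁻¹) * ∑ u ∈ Finset.range (max K (T+1) - (T+1)), ((2:ℝ)⁻¹) ^ u
                      ≤ (128 * ((2:ℝ) ^ (T+1))⁻¹) * 2 := by
                        apply mul_le_mul_of_nonneg_left hgeom (by positivity)
                  _ ≤ 256 / Real.sqrt Nr := by
                      rw [div_eq_mul_inv]
                      have h1 : ((2:ℝ) ^ (T+1))⁻¹ ≤ (Real.sqrt Nr)⁻¹ := by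
                        apply inv_anti₀ hsq0 (le_of_lt hS2T)
                      linarith
      _ = 512 / Real.sqrt Nr := by ring


/-- Slice estimates: `‖Q₀,j‖ ≤ K·M^{−j}` (uniform bound on the diagonal entries),
`Tr Q₀,j ≤ K·M^{j}` and `Tr(Q₀,j²) ≤ K`, with `K` depending only on `M`. -/
theorem q0_slice_bounds (M : ℕ) (hM : 1 < M) :
    ∃ K : ℝ, 0 < K ∧ ∀ j : ℕ, 1 ≤ j →
      (∀ m n : ℤ, q0SliceEntry M j m n ≤ K * ((M : ℝ) ^ j)⁻¹) ∧
      (∑' mn : ℤ × ℤ, ENNReal.ofReal (q0SliceEntry M j mn.1 mn.2)) ≤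
        ENNReal.ofReal (K * (M : ℝ) ^ j) ∧
      (∑' mn : ℤ × ℤ, ENNReal.ofReal ((q0SliceEntry M j mn.1 mn.2) ^ 2)) ≤
        ENNReal.ofReal K := by
  have hM1 : (1:ℝ) < (M:ℝ) := by exact_mod_cast hM
  have hM0 : (0:ℝ) < (M:ℝ) := by linarith
  refine ⟨2359296 * (M:ℝ) ^ 2, by positivity, ?_⟩
  intro j hj
  have hMj0 : (0:ℝ) < (M:ℝ) ^ j := by positivity
  have hMj1 : (1:ℝ) ≤ (M:ℝ) ^ j := one_le_pow₀ hM1.le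
  -- structure of the slice entry
  have hmono : ((M:ℤ) ^ (2 * (j-1)) ≤ (M:ℤ) ^ (2 * j)) := by
    apply pow_le_pow_right₀ (by exact_mod_cast hM.le)
    omega
  have hstruct : ∀ m n : ℤ, q0SliceEntry M j m n = 0 ∨
      ((M:ℤ) ^ (2 * (j-1)) < 1 + m ^ 2 + n ^ 2 ∧ 1 + m ^ 2 + n ^ 2 ≤ (M:ℤ) ^ (2 * j) ∧
        q0SliceEntry M j m n = q0Entry m n) := by
    intro m n
    unfold q0SliceEntry
    by_cases h1 : 1 + m ^ 2 + n ^ 2 ≤ (M : ℤ) ^ (2 * j)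
    · by_cases h2 : 1 + m ^ 2 + n ^ 2 ≤ (M : ℤ) ^ (2 * (j - 1))
      · left; rw [if_pos h1, if_pos h2]; ring
      · right
        exact ⟨not_le.mp h2, h1, by rw [if_pos h1, if_neg h2]; ring⟩
    · left
      rw [if_neg h1, if_neg (fun h2 => h1 (le_trans h2 hmono))]
      ring
  have hslice_nonneg : ∀ m n : ℤ, 0 ≤ q0SliceEntry M j m n := by
    intro m n
    rcases hstruct m n with h | ⟨_, _, h⟩
    · rw [h]
    · rw [h]; exact q0Entry_nonneg m n
  -- pointwise bound
  have hpoint : ∀ m n : ℤ, q0SliceEntry M j m n ≤ 512 * (M:ℝ) * ((M:ℝ) ^ j)⁻¹ := by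
    intro m n
    rcases hstruct m n with h | ⟨hlo, _, h⟩
    · rw [h]; positivity
    · rw [h]
      calc q0Entry m n ≤ 512 / Real.sqrt ((1 + m ^ 2 + n ^ 2 : ℤ) : ℝ) := q0Entry_le_sqrt m n
      _ ≤ 512 / (M:ℝ) ^ (j-1) := by
          apply div_le_div_of_nonneg_left (by norm_num) (by positivity)
          rw [show ((M:ℝ) ^ (j-1)) = Real.sqrt (((M:ℝ) ^ (j-1)) ^ 2) from
            (Real.sqrt_sq (by positivity)).symm]
          apply Real.sqrt_le_sqrt
          have : ((M:ℝ) ^ (j-1)) ^ 2 = ((((M:ℤ) ^ (2 * (j-1))) : ℤ) : ℝ) := by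
            push_cast
            rw [← pow_mul]
            ring_nf
          rw [this]
          have := hlo
          exact_mod_cast this.le
      _ = 512 * (M:ℝ) * ((M:ℝ) ^ j)⁻¹ := by
          have hjj : (M:ℝ) ^ j = (M:ℝ) ^ (j - 1) * (M:ℝ) := by
            rw [← pow_succ]
            congr 1
            omega
          rw [hjj, mul_inv, div_eq_mul_inv]
          have h1 : ((M:ℝ)) * ((M:ℝ))⁻¹ = 1 := mul_inv_cancel₀ (ne_of_gt hM0)
          calc (512:ℝ) * ((M:ℝ) ^ (j-1))⁻¹
              = 512 * ((M:ℝ) * ((M:ℝ))⁻¹) * ((M:ℝ) ^ (j-1))⁻¹ := by rw [h1]; ring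
          _ = 512 * (M:ℝ) * (((M:ℝ) ^ (j-1))⁻¹ * ((M:ℝ))⁻¹) := by ring
  -- support of the slice
  set s : Finset (ℤ × ℤ) :=
    (Finset.Icc (-(M:ℤ) ^ j) ((M:ℤ) ^ j)) ×ˢ (Finset.Icc (-(M:ℤ) ^ j) ((M:ℤ) ^ j)) with hs
  have hzero : ∀ x : ℤ × ℤ, x ∉ s → q0SliceEntry M j x.1 x.2 = 0 := by
    intro x hx
    rcases hstruct x.1 x.2 with h | ⟨_, hub, _⟩
    · exact h
    · exfalso
      apply hx
    
      rw [hs, Finset.mem_product, Finset.mem_Icc, Finset.mem_Icc]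
      have hsq : ((M:ℤ) ^ j) ^ 2 = (M:ℤ) ^ (2 * j) := by rw [← pow_mul]; ring_nf
      have hx1 : x.1 ^ 2 ≤ ((M:ℤ) ^ j) ^ 2 := by nlinarith [sq_nonneg x.2]
      have hx2 : x.2 ^ 2 ≤ ((M:ℤ) ^ j) ^ 2 := by nlinarith [sq_nonneg x.1]
      have hMj0' : (0:ℤ) < (M:ℤ) ^ j := by positivity
      constructor
      · constructor <;> nlinarith
      · constructor <;> nlinarith
  have hcards : ((s.card : ℝ)) ≤ 9 * ((M:ℝ) ^ j) ^ 2 := by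
    rw [hs, Finset.card_product, Int.card_Icc]
    have h1 : ((M:ℤ) ^ j + 1 - -(M:ℤ) ^ j) = 2 * (M:ℤ) ^ j + 1 := by ring
    rw [h1]
    have hMj0' : (0:ℤ) < (M:ℤ) ^ j := by positivity
    have hcast : (((2 * (M:ℤ) ^ j + 1).toNat : ℝ)) = 2 * (M:ℝ) ^ j + 1 := by
      have h2 : ((2 * (M:ℤ) ^ j + 1).toNat : ℤ) = 2 * (M:ℤ) ^ j + 1 :=
        Int.toNat_of_nonneg (by omega)
      have h3 := congrArg (Int.cast : ℤ → ℝ) h2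
      push_cast at h3
      push_cast
      linarith
    push_cast
    rw [hcast]
    nlinarith [hMj1]
  have hofreal_zero : ∀ x : ℤ × ℤ, x ∉ s → ENNReal.ofReal (q0SliceEntry M j x.1 x.2) = 0 := by
    intro x hx; rw [hzero x hx]; simp
  have hofreal_zero2 : ∀ x : ℤ × ℤ, x ∉ s →
      ENNReal.ofReal ((q0SliceEntry M j x.1 x.2) ^ 2) = 0 := by
    intro x hx; rw [hzero x hx]; simp
  have hc0 : (0:ℝ) ≤ 512 * (M:ℝ) * ((M:ℝ) ^ j)⁻¹ := by positivity
  have hcube : ((M:ℝ) ^ j) ^ 2 * ((M:ℝ) ^ j)⁻¹ = (M:ℝ) ^ j := by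
    field_simp
  have htraces : (∑' mn : ℤ × ℤ, ENNReal.ofReal (q0SliceEntry M j mn.1 mn.2)) ≤
        ENNReal.ofReal (2359296 * (M:ℝ) ^ 2 * (M : ℝ) ^ j) ∧
      (∑' mn : ℤ × ℤ, ENNReal.ofReal ((q0SliceEntry M j mn.1 mn.2) ^ 2)) ≤
        ENNReal.ofReal (2359296 * (M:ℝ) ^ 2) := by
    constructor
    · rw [tsum_eq_sum hofreal_zero]
      calc ∑ x ∈ s, ENNReal.ofReal (q0SliceEntry M j x.1 x.2)
          ≤ ∑ _x ∈ s, ENNReal.ofReal (512 * (M:ℝ) * ((M:ℝ) ^ j)⁻¹) :=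
            Finset.sum_le_sum (fun x _ => ENNReal.ofReal_le_ofReal (hpoint x.1 x.2))
      _ = s.card • ENNReal.ofReal (512 * (M:ℝ) * ((M:ℝ) ^ j)⁻¹) := Finset.sum_const _
      _ = ENNReal.ofReal ((s.card : ℝ)) * ENNReal.ofReal (512 * (M:ℝ) * ((M:ℝ) ^ j)⁻¹) := by
          rw [nsmul_eq_mul, ← ENNReal.ofReal_natCast s.card]
      _ = ENNReal.ofReal ((s.card : ℝ) * (512 * (M:ℝ) * ((M:ℝ) ^ j)⁻¹)) :=
          (ENNReal.ofReal_mul (by positivity)).symm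
      _ ≤ ENNReal.ofReal (2359296 * (M:ℝ) ^ 2 * (M : ℝ) ^ j) := by
          apply ENNReal.ofReal_le_ofReal
          calc (s.card : ℝ) * (512 * (M:ℝ) * ((M:ℝ) ^ j)⁻¹)
              ≤ (9 * ((M:ℝ) ^ j) ^ 2) * (512 * (M:ℝ) * ((M:ℝ) ^ j)⁻¹) := by
                apply mul_le_mul_of_nonneg_right hcards hc0
          _ = 4608 * (M:ℝ) * (((M:ℝ) ^ j) ^ 2 * ((M:ℝ) ^ j)⁻¹) := by ring
          _ = 4608 * (M:ℝ) * (M:ℝ) ^ j := by rw [hcube]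
          _ ≤ 2359296 * (M:ℝ) ^ 2 * (M : ℝ) ^ j := by
                have hMM : (M:ℝ) ≤ (M:ℝ) ^ 2 := by nlinarith
                apply mul_le_mul_of_nonneg_right _ hMj0.le
                nlinarith
    · rw [tsum_eq_sum hofreal_zero2]
      have hpt2 : ∀ x : ℤ × ℤ, (q0SliceEntry M j x.1 x.2) ^ 2
          ≤ (512 * (M:ℝ) * ((M:ℝ) ^ j)⁻¹) ^ 2 := by
        intro x
        exact pow_le_pow_left₀ (hslice_nonneg x.1 x.2) (hpoint x.1 x.2) 2
      calc ∑ x ∈ s, ENNReal.ofReal ((q0SliceEntry M j x.1 x.2) ^ 2)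
          ≤ ∑ _x ∈ s, ENNReal.ofReal ((512 * (M:ℝ) * ((M:ℝ) ^ j)⁻¹) ^ 2) :=
            Finset.sum_le_sum (fun x _ => ENNReal.ofReal_le_ofReal (hpt2 x))
      _ = s.card • ENNReal.ofReal ((512 * (M:ℝ) * ((M:ℝ) ^ j)⁻¹) ^ 2) := Finset.sum_const _
      _ = ENNReal.ofReal ((s.card : ℝ) * (512 * (M:ℝ) * ((M:ℝ) ^ j)⁻¹) ^ 2) := by
          rw [nsmul_eq_mul, ← ENNReal.ofReal_natCast s.card,
            ← ENNReal.ofReal_mul (by positivity)]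
      _ ≤ ENNReal.ofReal (2359296 * (M:ℝ) ^ 2) := by
          apply ENNReal.ofReal_le_ofReal
          calc (s.card : ℝ) * (512 * (M:ℝ) * ((M:ℝ) ^ j)⁻¹) ^ 2
              ≤ (9 * ((M:ℝ) ^ j) ^ 2) * (512 * (M:ℝ) * ((M:ℝ) ^ j)⁻¹) ^ 2 := by
                apply mul_le_mul_of_nonneg_right hcards (by positivity)
          _ = 2359296 * (M:ℝ) ^ 2 * (((M:ℝ) ^ j) ^ 2 * (((M:ℝ) ^ j) ^ 2)⁻¹) := by
                rw [mul_pow, mul_pow, ← inv_pow]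
                ring
          _ = 2359296 * (M:ℝ) ^ 2 := by
                rw [mul_inv_cancel₀ (by positivity : (((M:ℝ) ^ j) ^ 2) ≠ 0)]
                ring
  refine ⟨fun m n => le_trans (hpoint m n) ?_, ?_, ?_⟩
  · apply mul_le_mul_of_nonneg_right _ (by positivity)
    nlinarith
  · -- trace bound
    rcases htraces with ⟨h1, h2⟩
    exact h1
  · rcases htraces with ⟨h1, h2⟩
    exact h2
end
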